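/- arXiv:2405.16391 — 12 statements merged into one kernel-verified Lean document; each statement's English description precedes it below -/
import Mathlib

section
/- Let C ≥ 1, let Z_1,…,Z_C be finite nonempty sets and Z = Z_1 × ⋯ × Z_C, let T ⊆ Z be a finite training set, a : T → ℝ, and κ a real-valued function on subsets of {1,…,C}. Define the kernel model f(z) = Σ_{t∈T} a(t)·κ(O(z,t)), where O(z,t) = {c : z_c = t_c}. Then there exist functions f_J : Z → ℝ for each J ⊆ {1,…,C}, where each f_J depends only on the coordinates (z_c)_{c∈J} (i.e. f_J(z) = f_J(z') whenever z_c = z'_c for all c ∈ J), such that for every z ∈ Z, f(z) = Σ_{J ∈ Conj(z|T)} f_J(z), where Conj(z|T) = {J ⊆ {1,…,C} : there exists t ∈ T with z_c = t_c for all c ∈ J}. -/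
open Finset

private lemma moebius_inv_finset {α : Type*} [DecidableEq α] (κ : Finset α → ℝ)
    (O : Finset α) :
    ∑ J ∈ O.powerset, ∑ I ∈ J.powerset, (-1 : ℝ) ^ (J \ I).card * κ I = κ O := by
  rw [Finset.sum_comm' (s' := fun I => O.powerset.filter (fun J => I ⊆ J)) (t' := O.powerset)
    (by
      intro J I
      simp only [mem_powerset, mem_filter]
      constructor
      · rintro ⟨hJO, hIJ⟩; exact ⟨⟨hJO, hIJ⟩, hIJ.trans hJO⟩
      · rintro ⟨⟨hJO, hIJ⟩, _⟩; exact ⟨hJO, hIJ⟩)]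
  have key : ∀ I ∈ O.powerset,
      ∑ J ∈ O.powerset.filter (fun J => I ⊆ J), (-1 : ℝ) ^ (J \ I).card * κ I
        = (if I = O then 1 else 0) * κ I := by
    intro I hI
    rw [mem_powerset] at hI
    have hbij : O.powerset.filter (fun J => I ⊆ J) = (O \ I).powerset.image (fun K => K ∪ I) := by
      ext J
      simp only [mem_filter, mem_powerset, mem_image]
      constructor
      · rintro ⟨hJO, hIJ⟩
        exact ⟨J \ I, sdiff_subset_sdiff hJO le_rfl, by
          rw [sdiff_union_self_eq_union, union_eq_left.2 hIJ]⟩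
      · rintro ⟨K, hK, rfl⟩
        exact ⟨union_subset ((hK.trans (sdiff_subset)) ) hI, subset_union_right⟩
    rw [hbij, Finset.sum_image (by
      intro K1 h1 K2 h2 heq
      rw [mem_coe, mem_powerset] at h1 h2
      have d1 : Disjoint K1 I := disjoint_of_subset_left h1 sdiff_disjoint
      have d2 : Disjoint K2 I := disjoint_of_subset_left h2 sdiff_disjoint
      have : (K1 ∪ I) \ I = (K2 ∪ I) \ I := by rw [show K1 ∪ I = K2 ∪ I from heq]
      rwa [union_sdiff_right, union_sdiff_right, sdiff_eq_self_of_disjoint d1,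
        sdiff_eq_self_of_disjoint d2] at this)]
    have hterm : ∀ K ∈ (O \ I).powerset, (-1 : ℝ) ^ ((K ∪ I) \ I).card * κ I
        = (-1 : ℝ) ^ K.card * κ I := by
      intro K hK
      rw [mem_powerset] at hK
      have d : Disjoint K I := disjoint_of_subset_left hK sdiff_disjoint
      rw [union_sdiff_right, sdiff_eq_self_of_disjoint d]
    rw [Finset.sum_congr rfl hterm, ← Finset.sum_mul]
    congr 1
    have : (∑ K ∈ (O \ I).powerset, (-1 : ℝ) ^ K.card)
        = ((∑ K ∈ (O \ I).powerset, (-1 : ℤ) ^ K.card : ℤ) : ℝ) := by push_cast; rfl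
    rw [this, Finset.sum_powerset_neg_one_pow_card]
    simp only [sdiff_eq_empty_iff_subset]
    by_cases h : I = O
    · simp [h]
    · rw [if_neg h, if_neg (fun hOI => h (subset_antisymm hI hOI))]
      simp
  rw [Finset.sum_congr rfl key]
  simp only [ite_mul, one_mul, zero_mul]
  rw [Finset.sum_ite_eq' O.powerset O κ]
  simp

/-- Theorem 1 (conjunction-wise additivity): a kernel model with a compositionally
structured kernel can be written, on every input, as a sum of conjunction-wise
functions over the conjunctions seen during training. -/
theorem conjunction_wise_additivity
    (C : ℕ) (hC : 1 ≤ C) (Z : Fin C → Type*)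
    [∀ c, Fintype (Z c)] [∀ c, Nonempty (Z c)] [∀ c, DecidableEq (Z c)]
    (T : Finset (∀ c, Z c)) (a : (∀ c, Z c) → ℝ) (κ : Finset (Fin C) → ℝ)
    (f : (∀ c, Z c) → ℝ)
    (hf : ∀ z, f z = ∑ t ∈ T, a t * κ (univ.filter fun c => z c = t c)) :
    ∃ fJ : Finset (Fin C) → (∀ c, Z c) → ℝ,
      (∀ J : Finset (Fin C), ∀ z z' : (∀ c, Z c),
          (∀ c ∈ J, z c = z' c) → fJ J z = fJ J z') ∧
      (∀ z : (∀ c, Z c),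
        f z = ∑ J ∈ (univ : Finset (Finset (Fin C))).filter
            (fun J => ∃ t ∈ T, ∀ c ∈ J, z c = t c), fJ J z) := by
  set μ : Finset (Fin C) → ℝ := fun J => ∑ I ∈ J.powerset, (-1 : ℝ) ^ (J \ I).card * κ I with hμ
  refine ⟨fun J z => μ J * ∑ t ∈ T.filter (fun t => ∀ c ∈ J, z c = t c), a t, ?_, ?_⟩
  · intro J z z' hzz'
    dsimp only
    have : T.filter (fun t => ∀ c ∈ J, z c = t c) = T.filter (fun t => ∀ c ∈ J, z' c = t c) := by
      apply Finset.filter_congr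
      intro t _
      constructor <;> intro h c hc
      · rw [← hzz' c hc]; exact h c hc
      · rw [hzz' c hc]; exact h c hc
    rw [this]
  · intro z
    rw [Finset.sum_filter_of_ne (by
      intro J _ hne
      by_contra h
      push_neg at h
      apply hne
      have : T.filter (fun t => ∀ c ∈ J, z c = t c) = ∅ := by
        apply Finset.filter_eq_empty_iff.2
        intro t ht hcond
        exact absurd hcond (by simpa using h t ht)
      simp [this])]
    rw [hf z]
    simp_rw [Finset.mul_sum]
    rw [Finset.sum_comm' (s := (univ : Finset (Finset (Fin C))))
      (t := fun J => T.filter (fun t => ∀ c ∈ J, z c = t c))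
      (t' := T) (s' := fun t => univ.filter (fun J => ∀ c ∈ J, z c = t c))
      (by
        intro J t
        simp only [mem_filter, mem_univ, true_and, and_comm])]
    apply Finset.sum_congr rfl
    intro t _
    have hpow : univ.filter (fun J => ∀ c ∈ J, z c = t c)
        = (univ.filter fun c => z c = t c).powerset := by
      ext J
      simp [Finset.subset_iff]
    rw [hpow, ← Finset.sum_mul, mul_comm, ← moebius_inv_finset κ (univ.filter fun c => z c = t c)]
end

section
/- Let C ≥ 1, let Z_1,…,Z_C be finite nonempty sets, Z = Z_1 × ⋯ × Z_C, let T ⊆ Z be a finite training set, a : T → ℝ, and κ a real-valued function on subsets of {1,…,C}, and let f(z) = Σ_{t∈T} a(t)·κ(O(z,t)) with O(z,t) = {c : z_c = t_c}. Suppose C = 2. Then there exist functions g₁ : Z_1 → ℝ and g₂ : Z_2 → ℝ such that for every z = (z_1,z_2) ∈ Z with the property that no t ∈ T satisfies (t_1,t_2) = (z_1,z_2), one has f(z) = g₁(z_1) + g₂(z_2). -/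
/-!
On an unseen input every overlap `O(z, t)` is a proper subset of `{0, 1}`, and on the proper
subsets of a two-element set any function splits as a term depending only on whether `0` belongs
to the subset plus a term depending only on whether `1` does. Summing over `t ∈ T` separates `f z`
into a function of `z 0` plus a function of `z 1`.
-/

open Finset

theorem Finset.fin_two_apply_eq_add_of_ne_univ {G : Type*} [AddCommGroup G]
    (κ : Finset (Fin 2) → G) {s : Finset (Fin 2)} (hs : s ≠ univ) :
    κ s = (if 0 ∈ s then κ {0} else κ ∅) + (if 1 ∈ s then κ {1} - κ ∅ else 0) := by
  by_cases h0 : 0 ∈ s <;> by_cases h1 : 1 ∈ s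
  · exact absurd (eq_univ_of_forall fun c => by fin_cases c <;> assumption) hs
  · obtain rfl : s = {0} := by ext c; fin_cases c <;> simp [h0, h1]
    simp
  · obtain rfl : s = {1} := by ext c; fin_cases c <;> simp [h0, h1]
    simp
  · obtain rfl : s = ∅ := by ext c; fin_cases c <;> simp [h0, h1]
    simp

theorem two_components_additive_on_unseen_general
    (Z : Fin 2 → Type*)
    [∀ c, DecidableEq (Z c)]
    (T : Finset (∀ c, Z c)) (a : (∀ c, Z c) → ℝ) (κ : Finset (Fin 2) → ℝ)
    (f : (∀ c, Z c) → ℝ)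
    (hf : ∀ z, f z = ∑ t ∈ T, a t * κ (univ.filter fun c => z c = t c)) :
    ∃ (g₁ : Z 0 → ℝ) (g₂ : Z 1 → ℝ),
      ∀ z : (∀ c, Z c),
        (¬ ∃ t ∈ T, t 0 = z 0 ∧ t 1 = z 1) →
        f z = g₁ (z 0) + g₂ (z 1) := by
  refine ⟨fun x => ∑ t ∈ T, a t * if x = t 0 then κ {0} else κ ∅,
    fun y => ∑ t ∈ T, a t * if y = t 1 then κ {1} - κ ∅ else 0, fun z hz => ?_⟩
  rw [hf, ← sum_add_distrib]
  refine sum_congr rfl fun t ht => ?_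
  have hne : (univ.filter fun c => z c = t c) ≠ univ := fun h =>
    have hzt := filter_eq_self.mp h
    hz ⟨t, ht, (hzt 0 (mem_univ _)).symm, (hzt 1 (mem_univ _)).symm⟩
  rw [← mul_add, Finset.fin_two_apply_eq_add_of_ne_univ κ hne]
  simp only [mem_filter, mem_univ, true_and]

/-- Corollary of Theorem 1 for two components: on inputs whose full conjunction
is unseen during training, the kernel model is component-wise additive. -/
theorem two_components_additive_on_unseen
    (Z : Fin 2 → Type*)
    [∀ c, Fintype (Z c)] [∀ c, Nonempty (Z c)] [∀ c, DecidableEq (Z c)]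
    (T : Finset (∀ c, Z c)) (a : (∀ c, Z c) → ℝ) (κ : Finset (Fin 2) → ℝ)
    (f : (∀ c, Z c) → ℝ)
    (hf : ∀ z, f z = ∑ t ∈ T, a t * κ (univ.filter fun c => z c = t c)) :
    ∃ (g₁ : Z 0 → ℝ) (g₂ : Z 1 → ℝ),
      ∀ z : (∀ c, Z c),
        (¬ ∃ t ∈ T, t 0 = z 0 ∧ t 1 = z 1) →
        f z = g₁ (z 0) + g₂ (z 1) :=
  two_components_additive_on_unseen_general Z T a κ f hf
end

section
/- Let S be a nonempty set and let ∼ be an equivalence relation on S having at least two distinct equivalence classes. Then there exist no functions f₁, f₂ : S → ℝ such that for all z₁, z₂ ∈ S: f₁(z₁) + f₂(z₂) > 0 whenever z₁ ∼ z₂, and f₁(z₁) + f₂(z₂) < 0 whenever z₁ is not equivalent to z₂. -/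
/-! Summing the two diagonal scores and the two cross scores of a pair `a, b` gives the same
total, `f₁ a + f₂ a + (f₁ b + f₂ b)`. A sign classifier makes the diagonal scores positive
(reflexivity) and, for inequivalent `a, b`, both cross scores negative (symmetry), which is
impossible. -/

theorem add_cross_pos_or_of_add_diag_pos {S M : Type*} [AddCommGroup M] [LinearOrder M]
    [IsOrderedAddMonoid M] {f₁ f₂ : S → M} {a b : S}
    (ha : 0 < f₁ a + f₂ a) (hb : 0 < f₁ b + f₂ b) :
    0 < f₁ a + f₂ b ∨ 0 < f₁ b + f₂ a := by
  have hsum : 0 < f₁ a + f₂ b + (f₁ b + f₂ a) := by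
    calc 0 < f₁ a + f₂ a + (f₁ b + f₂ b) := add_pos ha hb
      _ = f₁ a + f₂ b + (f₁ b + f₂ a) := by abel
  by_contra! hneg
  exact hsum.not_ge (add_nonpos hneg.1 hneg.2)

theorem no_additive_equivalence_classifier_general
    {S : Type*} (r : S → S → Prop) (hr : Equivalence r)
    (htwo : ∃ a b : S, ¬ r a b) :
    ¬ ∃ (f₁ f₂ : S → ℝ), ∀ z₁ z₂ : S,
        (r z₁ z₂ → f₁ z₁ + f₂ z₂ > 0) ∧ (¬ r z₁ z₂ → f₁ z₁ + f₂ z₂ < 0) := by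
  rintro ⟨f₁, f₂, h⟩
  obtain ⟨a, b, hab⟩ := htwo
  have hba : ¬ r b a := fun hba => hab (hr.symm hba)
  rcases add_cross_pos_or_of_add_diag_pos ((h a a).1 (hr.refl a)) ((h b b).1 (hr.refl b))
    with hpos | hpos
  · exact ((h a b).2 hab).not_gt hpos
  · exact ((h b a).2 hba).not_gt hpos

/-- No component-wise additive function can classify (by sign) an equivalence
relation with at least two distinct equivalence classes. -/
theorem no_additive_equivalence_classifier
    {S : Type*} [Nonempty S] (r : S → S → Prop) (hr : Equivalence r)
    (htwo : ∃ a b : S, ¬ r a b) :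
    ¬ ∃ (f₁ f₂ : S → ℝ), ∀ z₁ z₂ : S,
        (r z₁ z₂ → f₁ z₁ + f₂ z₂ > 0) ∧ (¬ r z₁ z₂ → f₁ z₁ + f₂ z₂ < 0) :=
  no_additive_equivalence_classifier_general r hr htwo
end

section
/- Let C₁ and C₂ be disjoint nonempty finite sets (context cues), let F₁ and F₂ be finite sets (features), and let d₁ : F₁ → ℝ and d₂ : F₂ → ℝ be arbitrary functions. Define the context-dependent target y : (C₁ ∪ C₂) × F₁ × F₂ → ℝ by y(c, z₁, z₂) = d₁(z₁) if c ∈ C₁ and y(c, z₁, z₂) = d₂(z₂) if c ∈ C₂. Then there exist functions g₁₂ : (C₁ ∪ C₂) × F₁ → ℝ and g₁₃ : (C₁ ∪ C₂) × F₂ → ℝ such that y(c, z₁, z₂) = g₁₂(c, z₁) + g₁₃(c, z₂) for all c ∈ C₁ ∪ C₂, z₁ ∈ F₁, z₂ ∈ F₂. -/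
theorem context_dependence_is_additive_general
    {α : Type*} [DecidableEq α] (C₁ C₂ : Finset α)
    (hdisj : Disjoint C₁ C₂)
    (F₁ F₂ : Type*)
    (d₁ : F₁ → ℝ) (d₂ : F₂ → ℝ)
    (y : α → F₁ → F₂ → ℝ)
    (hy₁ : ∀ c ∈ C₁, ∀ (z₁ : F₁) (z₂ : F₂), y c z₁ z₂ = d₁ z₁)
    (hy₂ : ∀ c ∈ C₂, ∀ (z₁ : F₁) (z₂ : F₂), y c z₁ z₂ = d₂ z₂) :
    ∃ (g₁₂ : α → F₁ → ℝ) (g₁₃ : α → F₂ → ℝ),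
      ∀ c ∈ C₁ ∪ C₂, ∀ (z₁ : F₁) (z₂ : F₂),
        y c z₁ z₂ = g₁₂ c z₁ + g₁₃ c z₂ := by
  refine ⟨fun c z₁ => if c ∈ C₁ then d₁ z₁ else 0,
    fun c z₂ => if c ∈ C₁ then 0 else d₂ z₂, fun c hc z₁ z₂ => ?_⟩
  rcases Finset.mem_union.mp hc with hc₁ | hc₂
  · simp [hc₁, hy₁ c hc₁ z₁ z₂]
  · have hc₁ : c ∉ C₁ := Finset.disjoint_right.mp hdisj hc₂
    simp [hc₁, hy₂ c hc₂ z₁ z₂]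

/-- Context dependence with novel stimulus compositions is conjunction-wise additive:
the context-dependent target is a sum of a context–feature-1 function and a
context–feature-2 function. -/
theorem context_dependence_is_additive
    {α : Type*} [DecidableEq α] (C₁ C₂ : Finset α)
    (hne₁ : C₁.Nonempty) (hne₂ : C₂.Nonempty) (hdisj : Disjoint C₁ C₂)
    (F₁ F₂ : Type*) [Fintype F₁] [Fintype F₂]
    (d₁ : F₁ → ℝ) (d₂ : F₂ → ℝ)
    (y : α → F₁ → F₂ → ℝ)
    (hy₁ : ∀ c ∈ C₁, ∀ (z₁ : F₁) (z₂ : F₂), y c z₁ z₂ = d₁ z₁)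
    (hy₂ : ∀ c ∈ C₂, ∀ (z₁ : F₁) (z₂ : F₂), y c z₁ z₂ = d₂ z₂) :
    ∃ (g₁₂ : α → F₁ → ℝ) (g₁₃ : α → F₂ → ℝ),
      ∀ c ∈ C₁ ∪ C₂, ∀ (z₁ : F₁) (z₂ : F₂),
        y c z₁ z₂ = g₁₂ c z₁ + g₁₃ c z₂ :=
  context_dependence_is_additive_general C₁ C₂ hdisj F₁ F₂ d₁ d₂ y hy₁ hy₂
end

section
/- Let σ : ℝ → ℝ be measurable with polynomial growth (there exist c > 0 and k ∈ ℕ with |σ(t)| ≤ c(1+|t|^k)), let γ_d be the standard Gaussian measure on ℝ^d, and define K_σ(x,x') = ∫ σ(⟨w,x⟩)σ(⟨w,x'⟩) dγ_d(w). Let C ≥ 1, let Z_1,…,Z_C be finite nonempty sets, Z = Z_1 × ⋯ × Z_C, and let x : Z → ℝ^d be a representation such that there is a function κ on subsets of {1,…,C} with ⟨x(z), x(z')⟩ = κ(O(z,z')) for all z, z' ∈ Z (including z = z'), where O(z,z') = {c : z_c = z'_c}. Then there exists a function κ' on subsets of {1,…,C} such that K_σ(x(z), x(z')) = κ'(O(z,z'))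 for all z, z' ∈ Z. -/
open MeasureTheory ProbabilityTheory Finset
open scoped ENNReal
open scoped RealInnerProductSpace

lemma exists_isometry_two {F : Type*} [NormedAddCommGroup F] [InnerProductSpace ℝ F]
    [FiniteDimensional ℝ F] (a b a' b' : F)
    (h1 : ‖a‖ = ‖a'‖) (h2 : ‖b‖ = ‖b'‖) (h3 : ⟪a, b⟫ = ⟪a', b'⟫) :
    ∃ f : F ≃ₗᵢ[ℝ] F, f a = a' ∧ f b = b' := by
  set f₁ := Submodule.reflection (ℝ ∙ (a - a'))ᗮ with hf₁
  have hfa : f₁ a = a' := Submodule.reflection_sub h1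
  have hb1 : ‖f₁ b‖ = ‖b'‖ := by rw [f₁.norm_map]; exact h2
  set f₂ := Submodule.reflection (ℝ ∙ (f₁ b - b'))ᗮ with hf₂
  refine ⟨f₁.trans f₂, ?_, ?_⟩
  · show f₂ (f₁ a) = a'
    rw [hfa]
    apply Submodule.reflection_mem_subspace_eq_self
    rw [Submodule.mem_orthogonal_singleton_iff_inner_left]
    have h4 : ⟪a', f₁ b⟫ = ⟪a', b'⟫ := by
      calc ⟪a', f₁ b⟫ = ⟪f₁ a, f₁ b⟫ := by rw [hfa]
        _ = ⟪a, b⟫ := f₁.inner_map_map a b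
        _ = ⟪a', b'⟫ := h3
    rw [inner_sub_right, h4, sub_self]
  · show f₂ (f₁ b) = b'
    exact Submodule.reflection_sub hb1


lemma lintegral_pi_prod {ι : Type*} [Fintype ι] [DecidableEq ι] (μ : ι → Measure ℝ)
    [∀ i, SigmaFinite (μ i)] (g : ι → ℝ → ℝ≥0∞) (hg : ∀ i, Measurable (g i)) :
    ∫⁻ w, ∏ i, g i (w i) ∂Measure.pi μ = ∏ i, ∫⁻ x, g i x ∂μ i := by
  have hF : Measurable fun w : ι → ℝ => ∏ i, g i (w i) :=
    Finset.measurable_prod _ fun i _ => (hg i).comp (measurable_pi_apply i)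
  have key : ∀ t : Finset ι, ∀ x : ι → ℝ,
      (∫⋯∫⁻_t, (fun w => ∏ i, g i (w i)) ∂μ) x
      = (∏ i ∈ t, ∫⁻ y, g i y ∂μ i) * ∏ i ∈ tᶜ, g i (x i) := by
    intro t
    induction t using Finset.induction_on with
    | empty => intro x; simp
    | insert i t hi ih =>
      intro x
      rw [lmarginal_insert _ hF hi]
      simp only [ih]
      have h1 : (insert i t)ᶜ = tᶜ.erase i := by
        simp [Finset.compl_insert]
      have h2 : i ∉ tᶜ.erase i := Finset.notMem_erase i _
      have h3 : tᶜ = insert i (tᶜ.erase i) :=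
        (Finset.insert_erase (by simp [hi])).symm
      have h4 : ∀ xi : ℝ, ∏ j ∈ tᶜ, g j (Function.update x i xi j)
          = g i xi * ∏ j ∈ tᶜ.erase i, g j (x j) := by
        intro xi
        rw [← Finset.mul_prod_erase tᶜ _ (by simp [hi] : i ∈ tᶜ), Function.update_self]
        congr 1
        refine Finset.prod_congr rfl fun j hj => ?_
        rw [Function.update_of_ne (Finset.ne_of_mem_erase hj)]
      simp only [h4]
      rw [Finset.prod_insert hi, h1]
      have : ∀ xi : ℝ, (∏ i ∈ t, ∫⁻ y, g i y ∂μ i) * (g i xi * ∏ j ∈ tᶜ.erase i, g j (x j))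
          = ((∏ i ∈ t, ∫⁻ y, g i y ∂μ i) * ∏ j ∈ tᶜ.erase i, g j (x j)) * g i xi := by
        intro xi; ring
      simp only [this]
      rw [lintegral_const_mul _ (hg i)]

      ring
  have h0 := key univ (fun _ => 0)
  simp only [Finset.compl_univ, Finset.prod_empty, mul_one] at h0
  rw [← h0]
  exact lintegral_eq_lmarginal_univ (fun _ => 0)

lemma map_equiv_withDensity {α β : Type*} [MeasurableSpace α] [MeasurableSpace β]
    (e : α ≃ᵐ β) (μ : Measure α) (g : α → ℝ≥0∞) :
    Measure.map e (μ.withDensity g)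
      = (Measure.map e μ).withDensity (fun y => g (e.symm y)) := by
  ext s hs
  rw [Measure.map_apply e.measurable hs, withDensity_apply _ (e.measurable hs),
    withDensity_apply _ hs, ← lintegral_indicator (e.measurable hs),
    ← lintegral_indicator hs, lintegral_map_equiv _ e]
  refine lintegral_congr fun w => ?_
  by_cases hw : e w ∈ s
  · rw [Set.indicator_of_mem hw, Set.indicator_of_mem (by simpa using hw), e.symm_apply_apply]
  · rw [Set.indicator_of_notMem hw, Set.indicator_of_notMem (by simpa using hw)]

lemma pi_gaussian_eq_withDensity (d : ℕ) :
    (Measure.pi fun _ : Fin d => gaussianReal 0 1)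
      = (volume : Measure (Fin d → ℝ)).withDensity
          (fun w => ∏ i, gaussianPDF 0 1 (w i)) := by
  refine (Measure.pi_eq (μ := fun _ : Fin d => gaussianReal 0 1) fun s hs => ?_)
  rw [withDensity_apply _ (MeasurableSet.univ_pi hs),
    ← lintegral_indicator (MeasurableSet.univ_pi hs)]
  have hind : ∀ w : Fin d → ℝ,
      (Set.pi Set.univ s).indicator (fun w => ∏ i, gaussianPDF 0 1 (w i)) w
      = ∏ i, (s i).indicator (gaussianPDF 0 1) (w i) := by
    intro w
    by_cases h : w ∈ Set.pi Set.univ s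
    · rw [Set.indicator_of_mem h]
      exact Finset.prod_congr rfl fun i _ =>
        (Set.indicator_of_mem (h i trivial) _).symm
    · rw [Set.indicator_of_notMem h]
      rw [Set.mem_univ_pi] at h
      push_neg at h
      obtain ⟨i, hi⟩ := h
      exact (Finset.prod_eq_zero (Finset.mem_univ i)
        (by simp [Set.indicator_of_notMem hi])).symm
  simp only [hind]
  rw [MeasureTheory.volume_pi,
    lintegral_pi_prod _ _ (fun i => (measurable_gaussianPDF 0 1).indicator (hs i))]
  refine Finset.prod_congr rfl fun i _ => ?_
  rw [lintegral_indicator (hs i), gaussianReal_of_var_ne_zero 0 one_ne_zero,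
    withDensity_apply _ (hs i)]

lemma volume_euclidean_eq_pi (d : ℕ) :
    (volume : Measure (EuclideanSpace ℝ (Fin d)))
      = Measure.map (MeasurableEquiv.toLp 2 (Fin d → ℝ)) (volume : Measure (Fin d → ℝ)) := by
  exact (PiLp.volume_preserving_toLp (Fin d)).map_eq.symm

lemma prod_gaussianPDF_eq (d : ℕ) (t : Fin d → ℝ) :
    (∏ i, gaussianPDF 0 1 (t i))
      = ENNReal.ofReal ((Real.sqrt (2 * Real.pi))⁻¹ ^ d
          * Real.exp (-(∑ i, t i ^ 2) / 2)) := by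
  have h1 : ∀ y : ℝ, gaussianPDFReal 0 1 y
      = (Real.sqrt (2 * Real.pi))⁻¹ * Real.exp (-(y ^ 2) / 2) := by
    intro y
    rw [gaussianPDFReal_def]
    norm_num
  simp only [gaussianPDF]
  rw [← ENNReal.ofReal_prod_of_nonneg (fun i _ => gaussianPDFReal_nonneg 0 1 (t i))]
  congr 1
  simp_rw [h1]
  rw [Finset.prod_mul_distrib, Finset.prod_const, ← Real.exp_sum]
  congr 2
  · simp
  · simp [neg_div, Finset.sum_div]

lemma sum_sq_eq_norm_sq (d : ℕ) (v : EuclideanSpace ℝ (Fin d)) :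
    ∑ i, v i ^ 2 = ‖v‖ ^ 2 := by
  rw [EuclideanSpace.norm_eq, Real.sq_sqrt (by positivity)]
  simp [Real.norm_eq_abs, sq_abs]

lemma gaussian_map_isometry (d : ℕ)
    (f : EuclideanSpace ℝ (Fin d) ≃ₗᵢ[ℝ] EuclideanSpace ℝ (Fin d)) :
    Measure.map f (Measure.map (MeasurableEquiv.toLp 2 (Fin d → ℝ)) (Measure.pi fun _ : Fin d => gaussianReal 0 1))
      = (Measure.map (MeasurableEquiv.toLp 2 (Fin d → ℝ)) (Measure.pi fun _ : Fin d => gaussianReal 0 1)) := by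
  have hpi : (Measure.map (MeasurableEquiv.toLp 2 (Fin d → ℝ)) (Measure.pi fun _ : Fin d => gaussianReal 0 1))
      = (volume : Measure (EuclideanSpace ℝ (Fin d))).withDensity
          (fun w => ∏ i, gaussianPDF 0 1 (w i)) := by
    rw [volume_euclidean_eq_pi, pi_gaussian_eq_withDensity d, map_equiv_withDensity]
    rfl
  rw [hpi, show ⇑f = ⇑f.toMeasurableEquiv from rfl,
    map_equiv_withDensity f.toMeasurableEquiv]
  rw [show Measure.map (⇑f.toMeasurableEquiv) volume = volume from f.measurePreserving.map_eq]
  congr 1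
  funext w
  have hsym : ⇑f.toMeasurableEquiv.symm = ⇑f.symm := rfl
  rw [hsym, prod_gaussianPDF_eq, prod_gaussianPDF_eq]
  rw [sum_sq_eq_norm_sq, sum_sq_eq_norm_sq, f.symm.norm_map]

open scoped RealInnerProductSpace

lemma euclid_inner_eq_sum (d : ℕ) (u v : EuclideanSpace ℝ (Fin d)) :
    ⟪u, v⟫ = ∑ i, u i * v i := by
  simp [PiLp.inner_apply, RCLike.inner_apply, mul_comm]

lemma integral_kernel_eq (σ : ℝ → ℝ) (hσm : Measurable σ) (d : ℕ)
    (a b a' b' : EuclideanSpace ℝ (Fin d))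
    (h1 : ⟪a, a⟫ = ⟪a', a'⟫) (h2 : ⟪b, b⟫ = ⟪b', b'⟫) (h3 : ⟪a, b⟫ = ⟪a', b'⟫) :
    ∫ w : EuclideanSpace ℝ (Fin d), σ ⟪w, a⟫ * σ ⟪w, b⟫
        ∂(Measure.map (MeasurableEquiv.toLp 2 (Fin d → ℝ)) (Measure.pi fun _ : Fin d => gaussianReal 0 1))
    = ∫ w : EuclideanSpace ℝ (Fin d), σ ⟪w, a'⟫ * σ ⟪w, b'⟫
        ∂(Measure.map (MeasurableEquiv.toLp 2 (Fin d → ℝ)) (Measure.pi fun _ : Fin d => gaussianReal 0 1)) := by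
  have hna : ‖a'‖ = ‖a‖ := by
    have h : ‖a‖ ^ 2 = ‖a'‖ ^ 2 := by
      rw [← real_inner_self_eq_norm_sq, ← real_inner_self_eq_norm_sq]; exact h1
    nlinarith [norm_nonneg a, norm_nonneg a']
  have hnb : ‖b'‖ = ‖b‖ := by
    have h : ‖b‖ ^ 2 = ‖b'‖ ^ 2 := by
      rw [← real_inner_self_eq_norm_sq, ← real_inner_self_eq_norm_sq]; exact h2
    nlinarith [norm_nonneg b, norm_nonneg b']
  obtain ⟨f, hfa, hfb⟩ := exists_isometry_two a' b' a b hna hnb h3.symm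
  have hcont : ∀ c : EuclideanSpace ℝ (Fin d),
      Continuous fun w : EuclideanSpace ℝ (Fin d) => ⟪w, c⟫ :=
    fun c => continuous_id.inner continuous_const
  have hmeas : AEStronglyMeasurable
      (fun w : EuclideanSpace ℝ (Fin d) => σ ⟪w, a⟫ * σ ⟪w, b⟫)
      (Measure.map (MeasurableEquiv.toLp 2 (Fin d → ℝ)) (Measure.pi fun _ : Fin d => gaussianReal 0 1)) :=
    ((hσm.comp (hcont a).measurable).mul
      (hσm.comp (hcont b).measurable)).aestronglyMeasurable
  calc ∫ w : EuclideanSpace ℝ (Fin d), σ ⟪w, a⟫ * σ ⟪w, b⟫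
        ∂(Measure.map (MeasurableEquiv.toLp 2 (Fin d → ℝ)) (Measure.pi fun _ : Fin d => gaussianReal 0 1))
      = ∫ w : EuclideanSpace ℝ (Fin d), σ ⟪w, a⟫ * σ ⟪w, b⟫
        ∂(Measure.map f (Measure.map (MeasurableEquiv.toLp 2 (Fin d → ℝ)) (Measure.pi fun _ : Fin d => gaussianReal 0 1))) := by
        rw [gaussian_map_isometry]
    _ = ∫ w : EuclideanSpace ℝ (Fin d), σ ⟪w, a'⟫ * σ ⟪w, b'⟫
        ∂(Measure.map (MeasurableEquiv.toLp 2 (Fin d → ℝ)) (Measure.pi fun _ : Fin d => gaussianReal 0 1)) := by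
        rw [integral_map f.continuous.measurable.aemeasurable
          (by rwa [gaussian_map_isometry])]
        simp only [← hfa, ← hfb, f.inner_map_map]


/-- One-layer Gaussian instance of Proposition 1: a random-weights layer
(in the infinite-width limit, with kernel given by the Gaussian expectation)
maps a compositionally structured representation to a compositionally
structured kernel. -/
theorem random_layer_preserves_compositional_structure
    (σ : ℝ → ℝ) (hσm : Measurable σ)
    (hσg : ∃ c : ℝ, 0 < c ∧ ∃ k : ℕ, ∀ t : ℝ, |σ t| ≤ c * (1 + |t| ^ k))
    (d : ℕ) (C : ℕ) (hC : 1 ≤ C) (Z : Fin C → Type*)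
    [∀ c, Fintype (Z c)] [∀ c, Nonempty (Z c)] [∀ c, DecidableEq (Z c)]
    (x : (∀ c, Z c) → Fin d → ℝ) (κ : Finset (Fin C) → ℝ)
    (hx : ∀ z z' : (∀ c, Z c),
      ∑ i, x z i * x z' i = κ (univ.filter fun c => z c = z' c)) :
    ∃ κ' : Finset (Fin C) → ℝ, ∀ z z' : (∀ c, Z c),
      (∫ w, σ (∑ i, w i * x z i) * σ (∑ i, w i * x z' i)
          ∂(Measure.pi fun _ : Fin d => gaussianReal 0 1))
        = κ' (univ.filter fun c => z c = z' c) := by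
  classical
  let X : (∀ c, Z c) → EuclideanSpace ℝ (Fin d) :=
    fun z => (WithLp.equiv 2 (Fin d → ℝ)).symm (x z)
  let I : (∀ c, Z c) → (∀ c, Z c) → ℝ := fun z z' =>
    ∫ w : EuclideanSpace ℝ (Fin d), σ ⟪w, X z⟫ * σ ⟪w, X z'⟫
      ∂(Measure.map (MeasurableEquiv.toLp 2 (Fin d → ℝ)) (Measure.pi fun _ : Fin d => gaussianReal 0 1))
  have hIeq : ∀ z z' : (∀ c, Z c),
      (∫ w, σ (∑ i, w i * x z i) * σ (∑ i, w i * x z' i)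
        ∂(Measure.pi fun _ : Fin d => gaussianReal 0 1)) = I z z' := by
    intro z z'
    simp only [I]
    rw [MeasureTheory.integral_map_equiv]
    simp only [euclid_inner_eq_sum]
    rfl
  have inner_eq : ∀ u v : (∀ c, Z c),
      ⟪X u, X v⟫ = κ (univ.filter fun c => u c = v c) := by
    intro u v
    rw [euclid_inner_eq_sum]
    exact hx u v
  have hmain : ∀ z z' z₀ z₀' : (∀ c, Z c),
      (univ.filter fun c => z₀ c = z₀' c) = (univ.filter fun c => z c = z' c) →
      I z z' = I z₀ z₀' := by
    intro z z' z₀ z₀' hS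
    have e1 : ⟪X z₀, X z₀⟫ = ⟪X z, X z⟫ := by
      rw [inner_eq, inner_eq]; simp
    have e2 : ⟪X z₀', X z₀'⟫ = ⟪X z', X z'⟫ := by
      rw [inner_eq, inner_eq]; simp
    have e3 : ⟪X z₀, X z₀'⟫ = ⟪X z, X z'⟫ := by
      rw [inner_eq, inner_eq, hS]
    exact (integral_kernel_eq σ hσm d (X z₀) (X z₀') (X z) (X z') e1 e2 e3).symm
  refine ⟨fun S => if h : ∃ p : (∀ c, Z c) × (∀ c, Z c),
      (univ.filter fun c => p.1 c = p.2 c) = S then I h.choose.1 h.choose.2 else 0,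
    fun z z' => ?_⟩
  have hex : ∃ p : (∀ c, Z c) × (∀ c, Z c),
      (univ.filter fun c => p.1 c = p.2 c) = (univ.filter fun c => z c = z' c) :=
    ⟨(z, z'), rfl⟩
  rw [hIeq z z']
  beta_reduce
  rw [dif_pos hex]
  exact hmain z z' hex.choose.1 hex.choose.2 hex.choose_spec
end

section
/- Let A ∈ [0,1) and define the leaky-ReLU nonlinearity σ_A(t) = A·min(t,0) + max(t,0). Let u ∈ [−1,1], let Z₁, Z₂ be independent standard Gaussian random variables, and set G₁ = Z₁ and G₂ = u·Z₁ + √(1−u²)·Z₂. Then E[σ_A(G₁) σ_A(G₂)] = ((1−A)²/(2π)) · ( √(1−u²) + (π − arccos u)·u ) + A·u. -/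
open MeasureTheory ProbabilityTheory

open Real Filter Set Topology intervalIntegral

open scoped ENNReal NNReal

noncomputable def stdPdf (x : ℝ) : ℝ := (Real.sqrt (2 * π))⁻¹ * Real.exp (-x ^ 2 / 2)

lemma stdPdf_nonneg (x : ℝ) : 0 ≤ stdPdf x := by unfold stdPdf; positivity

lemma continuous_stdPdf : Continuous stdPdf := by unfold stdPdf; fun_prop

lemma integrable_q : Integrable (fun x : ℝ => (x ^ 2 + 1) * stdPdf x) := by
  have hg : Integrable (fun x : ℝ => (4 * (Real.sqrt (2 * π))⁻¹) * Real.exp (-(1/4) * x ^ 2)) :=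
    (integrable_exp_neg_mul_sq (by norm_num)).const_mul _
  refine hg.mono' ?_ ?_
  · exact ((continuous_id.pow 2).add continuous_const).mul continuous_stdPdf |>.aestronglyMeasurable
  · refine Filter.Eventually.of_forall (fun x => ?_)
    have h1 : 0 ≤ (x ^ 2 + 1) * stdPdf x := by have := stdPdf_nonneg x; positivity
    rw [Real.norm_of_nonneg h1]
    unfold stdPdf
    have h2 : x ^ 2 + 1 ≤ 4 * Real.exp (x ^ 2 / 4) := by
      have := Real.add_one_le_exp (x ^ 2 / 4)
      nlinarith [sq_nonneg x]
    have h3 : Real.exp (x ^ 2 / 4) * Real.exp (-x ^ 2 / 2) = Real.exp (-(1/4) * x ^ 2) := by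
      rw [← Real.exp_add]; congr 1; ring
    have h4 : 0 < (Real.sqrt (2 * π))⁻¹ := by
      have := Real.pi_pos; positivity
    calc (x ^ 2 + 1) * ((Real.sqrt (2 * π))⁻¹ * Real.exp (-x ^ 2 / 2))
        ≤ (4 * Real.exp (x ^ 2 / 4)) * ((Real.sqrt (2 * π))⁻¹ * Real.exp (-x ^ 2 / 2)) := by
          apply mul_le_mul_of_nonneg_right h2; positivity
      _ = 4 * (Real.sqrt (2 * π))⁻¹ * (Real.exp (x ^ 2 / 4) * Real.exp (-x ^ 2 / 2)) := by ring
      _ = 4 * (Real.sqrt (2 * π))⁻¹ * Real.exp (-(1/4) * x ^ 2) := by rw [h3]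

lemma abs_sigma_le {A : ℝ} (hA0 : 0 ≤ A) (hA1 : A ≤ 1) (t : ℝ) :
    |A * min t 0 + max t 0| ≤ |t| := by
  rcases le_total t 0 with h | h
  · rw [min_eq_left h, max_eq_right h, add_zero, abs_mul]
    calc |A| * |t| ≤ 1 * |t| := mul_le_mul_of_nonneg_right (abs_le.2 ⟨by linarith, hA1⟩) (abs_nonneg t)
      _ = |t| := one_mul _
  · rw [min_eq_right h, max_eq_left h, mul_zero, zero_add]

lemma sigma_homog (A : ℝ) {r : ℝ} (hr : 0 ≤ r) (t : ℝ) :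
    A * min (r * t) 0 + max (r * t) 0 = r * (A * min t 0 + max t 0) := by
  have h1 : r * min t 0 = min (r * t) (r * 0) := mul_min_of_nonneg t 0 hr
  have h2 : r * max t 0 = max (r * t) (r * 0) := mul_max_of_nonneg t 0 hr
  rw [mul_zero] at h1 h2
  rw [← h1, ← h2]; ring

lemma gaussianPDFReal_eq_stdPdf (x : ℝ) : gaussianPDFReal 0 1 x = stdPdf x := by
  simp [gaussianPDFReal, stdPdf]

lemma integral_gaussianReal_eq (g : ℝ → ℝ) :
    ∫ x, g x ∂(gaussianReal 0 1) = ∫ x, stdPdf x * g x := by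
  rw [gaussianReal_of_var_ne_zero _ one_ne_zero]
  have h : (gaussianPDF 0 1) = fun x => ((Real.toNNReal (stdPdf x) : ℝ≥0) : ℝ≥0∞) := by
    ext x
    rw [gaussianPDF, gaussianPDFReal_eq_stdPdf, ENNReal.ofReal]
  rw [h, integral_withDensity_eq_integral_smul]
  · congr 1; ext x
    rw [NNReal.smul_def, Real.coe_toNNReal _ (stdPdf_nonneg x), smul_eq_mul]
  · have : Measurable stdPdf := by unfold stdPdf; fun_prop
    exact this.real_toNNReal

lemma radial_integral' : ∫ r in Set.Ioi (0:ℝ), r ^ 3 * Real.exp (-r ^ 2 / 2) = 2 := by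
  have hderiv : ∀ r ∈ Set.Ici (0:ℝ), HasDerivAt (fun r : ℝ => -(r ^ 2 + 2) * Real.exp (-r ^ 2 / 2))
      (r ^ 3 * Real.exp (-r ^ 2 / 2)) r := by
    intro r _
    have he : HasDerivAt (fun r : ℝ => Real.exp (-r ^ 2 / 2)) (Real.exp (-r ^ 2 / 2) * (-r)) r := by
      have h1 : HasDerivAt (fun r : ℝ => -r ^ 2 / 2) (-r) r := by
        have := ((hasDerivAt_pow 2 r).neg).div_const 2
        simpa using this.congr_deriv (by ring)
      exact ((Real.hasDerivAt_exp _).comp r h1).congr_deriv (by ring)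
    have hp : HasDerivAt (fun r : ℝ => -(r ^ 2 + 2)) (-(2 * r)) r := by
      have := ((hasDerivAt_pow 2 r).add_const 2).neg
      exact this.congr_deriv (by simp)
    have := hp.mul he
    exact this.congr_deriv (by ring)
  have hint : IntegrableOn (fun r : ℝ => r ^ 3 * Real.exp (-r ^ 2 / 2)) (Set.Ioi 0) := by
    have := integrableOn_rpow_mul_exp_neg_mul_sq (b := 1/2) (by norm_num) (s := 3) (by norm_num)
    refine this.congr_fun (fun x hx => ?_) measurableSet_Ioi
    show x ^ ((3:ℕ):ℝ) * _ = _
    rw [Real.rpow_natCast]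
    congr 1
    ring
  have htend : Tendsto (fun r : ℝ => -(r ^ 2 + 2) * Real.exp (-r ^ 2 / 2)) atTop (𝓝 0) := by
    have h1 : Tendsto (fun r : ℝ => r ^ 2 / 2) atTop atTop :=
      (tendsto_pow_atTop two_ne_zero).atTop_div_const two_pos
    have h2 : Tendsto (fun x : ℝ => x ^ 1 * Real.exp (-x)) atTop (𝓝 0) :=
      Real.tendsto_pow_mul_exp_neg_atTop_nhds_zero 1
    have h3 : Tendsto (fun r : ℝ => (r ^ 2 / 2) * Real.exp (-(r ^ 2 / 2))) atTop (𝓝 0) := by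
      simpa [Function.comp_def] using (h2.comp h1)
    have h4 : Tendsto (fun r : ℝ => Real.exp (-(r ^ 2 / 2))) atTop (𝓝 0) :=
      tendsto_exp_neg_atTop_nhds_zero.comp h1
    have h5 := (h3.const_mul (-2)).add (h4.const_mul (-2))
    have h6 : (fun r : ℝ => -(r ^ 2 + 2) * Real.exp (-r ^ 2 / 2))
        = fun r : ℝ => -2 * (r ^ 2 / 2 * Real.exp (-(r ^ 2 / 2))) + -2 * Real.exp (-(r ^ 2 / 2)) := by
      funext r; rw [neg_div]; ring
    rw [h6]; simpa using h5
  have := integral_Ioi_of_hasDerivAt_of_tendsto' hderiv hint htend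
  rw [this]; norm_num

lemma hasDerivAt_coscos (α θ : ℝ) :
    HasDerivAt (fun θ : ℝ => Real.sin (2 * θ - α) / 4 + θ * Real.cos α / 2)
      (Real.cos θ * Real.cos (θ - α)) θ := by
  have h1 : HasDerivAt (fun θ : ℝ => 2 * θ - α) 2 θ := by
    simpa using ((hasDerivAt_id θ).const_mul 2).sub_const α
  have h2 : HasDerivAt (fun θ : ℝ => Real.sin (2 * θ - α)) (Real.cos (2 * θ - α) * 2) θ :=
    (Real.hasDerivAt_sin _).comp θ h1
  have h3 := (h2.div_const 4).add ((hasDerivAt_id θ).mul_const (Real.cos α) |>.div_const 2)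
  refine h3.congr_deriv ?_
  have e1 : Real.cos (2 * θ - α) = Real.cos θ * Real.cos (θ - α) - Real.sin θ * Real.sin (θ - α) := by
    rw [show 2 * θ - α = θ + (θ - α) by ring, Real.cos_add]
  have e2 := Real.cos_sub θ (θ - α)
  rw [sub_sub_cancel] at e2
  rw [e1, e2]
  ring

lemma integral_coscos (α a b : ℝ) :
    ∫ θ in a..b, Real.cos θ * Real.cos (θ - α)
      = (Real.sin (2 * b - α) / 4 + b * Real.cos α / 2)
        - (Real.sin (2 * a - α) / 4 + a * Real.cos α / 2) := by
  refine intervalIntegral.integral_eq_sub_of_hasDerivAt (fun θ _ => hasDerivAt_coscos α θ) ?_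
  exact (Real.continuous_cos.mul (Real.continuous_cos.comp (continuous_id.sub continuous_const))).intervalIntegrable a b

lemma cos_nonpos_left {θ : ℝ} (h1 : -π ≤ θ) (h2 : θ ≤ -(π/2)) : Real.cos θ ≤ 0 := by
  rw [← Real.cos_neg]
  exact Real.cos_nonpos_of_pi_div_two_le_of_le (by linarith) (by linarith [Real.pi_pos])

lemma cos_nonpos_right {θ : ℝ} (h1 : π/2 ≤ θ) (h2 : θ ≤ π) : Real.cos θ ≤ 0 :=
  Real.cos_nonpos_of_pi_div_two_le_of_le h1 (by linarith [Real.pi_pos])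

lemma intInt_cc (c : ℝ) (g : ℝ → ℝ) (hg : Continuous g) (a b : ℝ) :
    IntervalIntegrable (fun θ => g (Real.cos θ) * Real.cos (θ - c)) volume a b :=
  ((hg.comp Real.continuous_cos).mul
    (Real.continuous_cos.comp (continuous_id.sub continuous_const))).intervalIntegrable a b

-- K1 : full cos*cos integral
lemma K1 (α : ℝ) : ∫ θ in (-π)..π, Real.cos θ * Real.cos (θ - α) = π * Real.cos α := by
  rw [integral_coscos]
  have e1 : 2 * π - α = 2 * π + (-α) := by ring
  have e2 : 2 * (-π) - α = -(2 * π) + (-α) := by ring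
  rw [e1, e2]
  simp [Real.sin_add, Real.sin_neg, Real.cos_neg, Real.sin_two_pi, Real.cos_two_pi]
  ring

-- K2 : ∫ max(cosθ,0) * cos(θ-α)
lemma K2 (α : ℝ) :
    ∫ θ in (-π)..π, max (Real.cos θ) 0 * Real.cos (θ - α) = π * Real.cos α / 2 := by
  have habs : IntervalIntegrable (fun θ => max (Real.cos θ) 0 * Real.cos (θ - α)) volume (-π) π := by
    exact intInt_cc α (fun x => max x 0) (continuous_id.max continuous_const) _ _
  have h1 : ∫ θ in (-π)..(-(π/2)), max (Real.cos θ) 0 * Real.cos (θ - α) = 0 := by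
    rw [intervalIntegral.integral_congr (g := fun _ => 0)]
    · simp
    · intro θ hθ
      rw [Set.uIcc_of_le (by linarith [Real.pi_pos])] at hθ
      simp [max_eq_right (cos_nonpos_left hθ.1 hθ.2)]
  have h3 : ∫ θ in (π/2)..π, max (Real.cos θ) 0 * Real.cos (θ - α) = 0 := by
    rw [intervalIntegral.integral_congr (g := fun _ => 0)]
    · simp
    · intro θ hθ
      rw [Set.uIcc_of_le (by linarith [Real.pi_pos])] at hθ
      simp [max_eq_right (cos_nonpos_right hθ.1 hθ.2)]
  have h2 : ∫ θ in (-(π/2))..(π/2), max (Real.cos θ) 0 * Real.cos (θ - α)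
      = π * Real.cos α / 2 := by
    rw [intervalIntegral.integral_congr (g := fun θ => Real.cos θ * Real.cos (θ - α))]
    · rw [integral_coscos]
      have e1 : 2 * (π/2) - α = π + (-α) := by ring
      have e2 : 2 * (-(π/2)) - α = -(π + α) := by ring
      rw [e1, e2, Real.sin_add, Real.sin_neg, Real.sin_neg, Real.sin_add, Real.sin_pi,
        Real.cos_pi]
      ring
    · intro θ hθ
      rw [Set.uIcc_of_le (by linarith [Real.pi_pos])] at hθ
      simp only [max_eq_left (Real.cos_nonneg_of_mem_Icc hθ)]
  have s1 := intervalIntegral.integral_add_adjacent_intervals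
    (a := -π) (b := -(π/2)) (c := π/2) (f := fun θ => max (Real.cos θ) 0 * Real.cos (θ - α))
    (habs.mono_set (by rw [Set.uIcc_of_le, Set.uIcc_of_le] <;> [skip; linarith [Real.pi_pos]; linarith [Real.pi_pos]] ; apply Set.Icc_subset_Icc <;> linarith [Real.pi_pos]))
    (habs.mono_set (by rw [Set.uIcc_of_le, Set.uIcc_of_le] <;> [skip; linarith [Real.pi_pos]; linarith [Real.pi_pos]] ; apply Set.Icc_subset_Icc <;> linarith [Real.pi_pos]))
  have s2 := intervalIntegral.integral_add_adjacent_intervals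
    (a := -π) (b := π/2) (c := π) (f := fun θ => max (Real.cos θ) 0 * Real.cos (θ - α))
    (habs.mono_set (by rw [Set.uIcc_of_le, Set.uIcc_of_le] <;> [skip; linarith [Real.pi_pos]; linarith [Real.pi_pos]] ; apply Set.Icc_subset_Icc <;> linarith [Real.pi_pos]))
    (habs.mono_set (by rw [Set.uIcc_of_le, Set.uIcc_of_le] <;> [skip; linarith [Real.pi_pos]; linarith [Real.pi_pos]] ; apply Set.Icc_subset_Icc <;> linarith [Real.pi_pos]))
  rw [← s2, ← s1, h1, h2, h3]
  ring

-- K3 : ∫ cosθ * max(cos(θ-α),0)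
lemma K3 (α : ℝ) :
    ∫ θ in (-π)..π, Real.cos θ * max (Real.cos (θ - α)) 0 = π * Real.cos α / 2 := by
  have hg : Function.Periodic (fun φ => Real.cos (φ + α) * max (Real.cos φ) 0) (2 * π) := by
    intro x
    simp only [show x + 2 * π + α = x + α + 2 * π by ring, Real.cos_add_two_pi]
  have e0 : (∫ θ in (-π)..π, Real.cos θ * max (Real.cos (θ - α)) 0)
      = ∫ φ in (-π - α)..(π - α), Real.cos (φ + α) * max (Real.cos φ) 0 := by
    rw [← intervalIntegral.integral_comp_sub_right
      (fun φ => Real.cos (φ + α) * max (Real.cos φ) 0) α]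
    apply intervalIntegral.integral_congr
    intro θ _
    simp only [sub_add_cancel]
  rw [e0]
  have e1 : (-π - α) + 2 * π = π - α := by ring
  have e2 : (-π) + 2 * π = π := by ring
  have := hg.intervalIntegral_add_eq (-π - α) (-π)
  rw [e1, e2] at this
  rw [this]
  have e3 : (∫ φ in (-π)..π, Real.cos (φ + α) * max (Real.cos φ) 0)
      = ∫ φ in (-π)..π, max (Real.cos φ) 0 * Real.cos (φ - (-α)) := by
    apply intervalIntegral.integral_congr
    intro φ _
    simp only [sub_neg_eq_add, mul_comm]
  rw [e3, K2, Real.cos_neg]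

-- K4 : ∫ max(cosθ,0) * max(cos(θ-α),0) for α ∈ [0,π]
lemma K4 {α : ℝ} (h0 : 0 ≤ α) (hπ : α ≤ π) :
    ∫ θ in (-π)..π, max (Real.cos θ) 0 * max (Real.cos (θ - α)) 0
      = (Real.sin α + (π - α) * Real.cos α) / 2 := by
  have pi_pos := Real.pi_pos
  have habs : IntervalIntegrable
      (fun θ => max (Real.cos θ) 0 * max (Real.cos (θ - α)) 0) volume (-π) π := by
    exact (((Real.continuous_cos.max continuous_const)).mul
      ((Real.continuous_cos.comp (continuous_id.sub continuous_const)).max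
        continuous_const)).intervalIntegrable _ _
  have h1 : ∫ θ in (-π)..(α - π/2), max (Real.cos θ) 0 * max (Real.cos (θ - α)) 0 = 0 := by
    rw [intervalIntegral.integral_congr (g := fun _ => 0)]
    · simp
    · intro θ hθ
      rw [Set.uIcc_of_le (by linarith)] at hθ
      rcases le_or_gt θ (-(π/2)) with hc | hc
      · simp [max_eq_right (cos_nonpos_left hθ.1 hc)]
      · have : Real.cos (θ - α) ≤ 0 := by
          rw [← Real.cos_neg, neg_sub]
          exact Real.cos_nonpos_of_pi_div_two_le_of_le (by linarith [hθ.2]) (by linarith)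
        simp [max_eq_right this]
  have h3 : ∫ θ in (π/2)..π, max (Real.cos θ) 0 * max (Real.cos (θ - α)) 0 = 0 := by
    rw [intervalIntegral.integral_congr (g := fun _ => 0)]
    · simp
    · intro θ hθ
      rw [Set.uIcc_of_le (by linarith)] at hθ
      simp [max_eq_right (cos_nonpos_right hθ.1 hθ.2)]
  have h2 : ∫ θ in (α - π/2)..(π/2), max (Real.cos θ) 0 * max (Real.cos (θ - α)) 0
      = (Real.sin α + (π - α) * Real.cos α) / 2 := by
    rw [intervalIntegral.integral_congr (g := fun θ => Real.cos θ * Real.cos (θ - α))]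
    · rw [integral_coscos]
      have e1 : 2 * (π/2) - α = π + (-α) := by ring
      have e2 : 2 * (α - π/2) - α = -(π - α) := by ring
      rw [e1, e2]
      simp [Real.sin_add, Real.sin_neg, Real.cos_neg, Real.sin_sub, Real.cos_sub]
      ring
    · intro θ hθ
      rw [Set.uIcc_of_le (by linarith)] at hθ
      have hc1 : 0 ≤ Real.cos θ :=
        Real.cos_nonneg_of_mem_Icc ⟨by linarith [hθ.1], hθ.2⟩
      have hc2 : 0 ≤ Real.cos (θ - α) :=
        Real.cos_nonneg_of_mem_Icc ⟨by linarith [hθ.1], by linarith [hθ.2]⟩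
      simp only [max_eq_left hc1, max_eq_left hc2]
  have s1 := intervalIntegral.integral_add_adjacent_intervals
    (a := -π) (b := α - π/2) (c := π/2)
    (f := fun θ => max (Real.cos θ) 0 * max (Real.cos (θ - α)) 0)
    (habs.mono_set (by rw [Set.uIcc_of_le (by linarith), Set.uIcc_of_le (by linarith)]; apply Set.Icc_subset_Icc <;> linarith))
    (habs.mono_set (by rw [Set.uIcc_of_le (by linarith), Set.uIcc_of_le (by linarith)]; apply Set.Icc_subset_Icc <;> linarith))
  have s2 := intervalIntegral.integral_add_adjacent_intervals
    (a := -π) (b := π/2) (c := π)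
    (f := fun θ => max (Real.cos θ) 0 * max (Real.cos (θ - α)) 0)
    (habs.mono_set (by rw [Set.uIcc_of_le (by linarith), Set.uIcc_of_le (by linarith)]; apply Set.Icc_subset_Icc <;> linarith))
    (habs.mono_set (by rw [Set.uIcc_of_le (by linarith), Set.uIcc_of_le (by linarith)]; apply Set.Icc_subset_Icc <;> linarith))
  rw [← s2, ← s1, h1, h2, h3]
  ring

lemma angular' (A : ℝ) {α : ℝ} (h0 : 0 ≤ α) (hπ : α ≤ π) :
    ∫ θ in (-π)..π,
        (A * min (Real.cos θ) 0 + max (Real.cos θ) 0)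
          * (A * min (Real.cos (θ - α)) 0 + max (Real.cos (θ - α)) 0)
      = A * π * Real.cos α
        + (1 - A) ^ 2 * (Real.sin α + (π - α) * Real.cos α) / 2 := by
  have key : ∀ θ : ℝ,
      (A * min (Real.cos θ) 0 + max (Real.cos θ) 0)
          * (A * min (Real.cos (θ - α)) 0 + max (Real.cos (θ - α)) 0)
        = A ^ 2 * (Real.cos θ * Real.cos (θ - α))
          + A * (1 - A) * (max (Real.cos θ) 0 * Real.cos (θ - α))
          + A * (1 - A) * (Real.cos θ * max (Real.cos (θ - α)) 0)
          + (1 - A) ^ 2 * (max (Real.cos θ) 0 * max (Real.cos (θ - α)) 0) := by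
    intro θ
    have m1 := min_add_max (Real.cos θ) 0
    have m2 := min_add_max (Real.cos (θ - α)) 0
    have e1 : min (Real.cos θ) 0 = Real.cos θ - max (Real.cos θ) 0 := by linarith
    have e2 : min (Real.cos (θ - α)) 0 = Real.cos (θ - α) - max (Real.cos (θ - α)) 0 := by
      linarith
    rw [e1, e2]; ring
  rw [intervalIntegral.integral_congr (g := fun θ =>
      A ^ 2 * (Real.cos θ * Real.cos (θ - α))
        + A * (1 - A) * (max (Real.cos θ) 0 * Real.cos (θ - α))
        + A * (1 - A) * (Real.cos θ * max (Real.cos (θ - α)) 0)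
        + (1 - A) ^ 2 * (max (Real.cos θ) 0 * max (Real.cos (θ - α)) 0))
    (fun θ _ => key θ)]
  have c1 : Continuous fun θ : ℝ => Real.cos θ * Real.cos (θ - α) :=
    Real.continuous_cos.mul (Real.continuous_cos.comp (continuous_id.sub continuous_const))
  have c2 : Continuous fun θ : ℝ => max (Real.cos θ) 0 * Real.cos (θ - α) :=
    (Real.continuous_cos.max continuous_const).mul
      (Real.continuous_cos.comp (continuous_id.sub continuous_const))
  have c3 : Continuous fun θ : ℝ => Real.cos θ * max (Real.cos (θ - α)) 0 :=
    Real.continuous_cos.mul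
      ((Real.continuous_cos.comp (continuous_id.sub continuous_const)).max continuous_const)
  have c4 : Continuous fun θ : ℝ => max (Real.cos θ) 0 * max (Real.cos (θ - α)) 0 :=
    (Real.continuous_cos.max continuous_const).mul
      ((Real.continuous_cos.comp (continuous_id.sub continuous_const)).max continuous_const)
  rw [intervalIntegral.integral_add, intervalIntegral.integral_add,
    intervalIntegral.integral_add]
  · rw [intervalIntegral.integral_const_mul, intervalIntegral.integral_const_mul,
      intervalIntegral.integral_const_mul, intervalIntegral.integral_const_mul,
      K1, K2, K3, K4 h0 hπ]
    ring
  · exact (continuous_const.mul c1).intervalIntegrable _ _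
  · exact (continuous_const.mul c2).intervalIntegrable _ _
  · exact ((continuous_const.mul c1).add (continuous_const.mul c2)).intervalIntegrable _ _
  · exact (continuous_const.mul c3).intervalIntegrable _ _
  · exact (((continuous_const.mul c1).add (continuous_const.mul c2)).add (continuous_const.mul c3)).intervalIntegrable _ _
  · exact (continuous_const.mul c4).intervalIntegrable _ _

lemma integrable_main (A : ℝ) (hA0 : 0 ≤ A) (hA1 : A ≤ 1) (u : ℝ) (hu1 : |u| ≤ 1) :
    Integrable (fun p : ℝ × ℝ => stdPdf p.1 * (stdPdf p.2 *
      ((A * min p.1 0 + max p.1 0) *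
        (A * min (u * p.1 + Real.sqrt (1 - u ^ 2) * p.2) 0
          + max (u * p.1 + Real.sqrt (1 - u ^ 2) * p.2) 0)))) := by
  set s := Real.sqrt (1 - u ^ 2) with hs
  have hs0 : 0 ≤ s := Real.sqrt_nonneg _
  have hs1 : s ≤ 1 := Real.sqrt_le_one.mpr (by nlinarith [sq_nonneg u])
  have hg : Integrable (fun p : ℝ × ℝ =>
      ((p.1 ^ 2 + 1) * stdPdf p.1) * ((p.2 ^ 2 + 1) * stdPdf p.2)) := by
    rw [MeasureTheory.Measure.volume_eq_prod]
    exact integrable_q.mul_prod integrable_q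
  refine hg.mono' ?_ (Filter.Eventually.of_forall fun p => ?_)
  · have hσ : Continuous (fun t : ℝ => A * min t 0 + max t 0) :=
      (continuous_const.mul (continuous_id.min continuous_const)).add
        (continuous_id.max continuous_const)
    exact ((continuous_stdPdf.comp continuous_fst).mul
      ((continuous_stdPdf.comp continuous_snd).mul
        ((hσ.comp continuous_fst).mul (hσ.comp
          ((continuous_const.mul continuous_fst).add
            (continuous_const.mul continuous_snd)))))).aestronglyMeasurable
  · have b1 : |A * min p.1 0 + max p.1 0| ≤ |p.1| := abs_sigma_le hA0 hA1 _
    have b2 : |A * min (u * p.1 + s * p.2) 0 + max (u * p.1 + s * p.2) 0|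
        ≤ |u * p.1 + s * p.2| := abs_sigma_le hA0 hA1 _
    have b3 : |u * p.1 + s * p.2| ≤ |p.1| + |p.2| := by
      calc |u * p.1 + s * p.2| ≤ |u * p.1| + |s * p.2| := abs_add_le _ _
        _ ≤ |p.1| + |p.2| := by
            rw [abs_mul, abs_mul]
            have : |s| = s := abs_of_nonneg hs0
            gcongr
            · calc |u| * |p.1| ≤ 1 * |p.1| := by gcongr
                _ = |p.1| := one_mul _
            · calc |s| * |p.2| ≤ 1 * |p.2| := by rw [this]; gcongr
                _ = |p.2| := one_mul _
    have b4 : |A * min p.1 0 + max p.1 0| *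
        |A * min (u * p.1 + s * p.2) 0 + max (u * p.1 + s * p.2) 0|
        ≤ |p.1| * (|p.1| + |p.2|) :=
      mul_le_mul b1 (b2.trans b3) (abs_nonneg _) (abs_nonneg _)
    have b5 : |p.1| * (|p.1| + |p.2|) ≤ (p.1 ^ 2 + 1) * (p.2 ^ 2 + 1) := by
      nlinarith [sq_abs p.1, sq_abs p.2, abs_nonneg p.1, abs_nonneg p.2,
        sq_nonneg (|p.1| * |p.2| - 1), mul_nonneg (abs_nonneg p.1) (abs_nonneg p.2)]
    calc ‖stdPdf p.1 * (stdPdf p.2 *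
          ((A * min p.1 0 + max p.1 0) *
            (A * min (u * p.1 + s * p.2) 0 + max (u * p.1 + s * p.2) 0)))‖
        = stdPdf p.1 * (stdPdf p.2 *
            (|A * min p.1 0 + max p.1 0| *
              |A * min (u * p.1 + s * p.2) 0 + max (u * p.1 + s * p.2) 0|)) := by
          rw [Real.norm_eq_abs, abs_mul, abs_mul, abs_mul,
            abs_of_nonneg (stdPdf_nonneg _), abs_of_nonneg (stdPdf_nonneg _)]
      _ ≤ stdPdf p.1 * (stdPdf p.2 * ((p.1 ^ 2 + 1) * (p.2 ^ 2 + 1))) := by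
          exact mul_le_mul_of_nonneg_left
            (mul_le_mul_of_nonneg_left (b4.trans b5) (stdPdf_nonneg p.2)) (stdPdf_nonneg p.1)
      _ = ((p.1 ^ 2 + 1) * stdPdf p.1) * ((p.2 ^ 2 + 1) * stdPdf p.2) := by ring

/-- Arc-cosine-type kernel for the leaky ReLU σ_A(t) = A·min(t,0) + max(t,0):
for jointly Gaussian standard variables with correlation u,
E[σ_A(G₁)σ_A(G₂)] = ((1−A)²/(2π))(√(1−u²) + (π − arccos u)u) + Au. -/
theorem leakyRelu_arccos_kernel
    (A : ℝ) (hA : A ∈ Set.Ico (0 : ℝ) 1) (u : ℝ) (hu : u ∈ Set.Icc (-1 : ℝ) 1) :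
    (∫ z₁, ∫ z₂,
        (A * min z₁ 0 + max z₁ 0) *
          (A * min (u * z₁ + Real.sqrt (1 - u ^ 2) * z₂) 0
            + max (u * z₁ + Real.sqrt (1 - u ^ 2) * z₂) 0)
        ∂(gaussianReal 0 1) ∂(gaussianReal 0 1))
      = (1 - A) ^ 2 / (2 * Real.pi)
          * (Real.sqrt (1 - u ^ 2) + (Real.pi - Real.arccos u) * u)
        + A * u := by
  obtain ⟨hA0, hA1⟩ := hA
  obtain ⟨hu1, hu2⟩ := hu
  have pi_pos := Real.pi_pos
  set s := Real.sqrt (1 - u ^ 2) with hsdef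
  set α := Real.arccos u with hαdef
  have hcos : Real.cos α = u := Real.cos_arccos hu1 hu2
  have hsin : Real.sin α = s := Real.sin_arccos u
  have hα0 : 0 ≤ α := Real.arccos_nonneg u
  have hαπ : α ≤ π := Real.arccos_le_pi u
  set f : ℝ × ℝ → ℝ := fun p => stdPdf p.1 * (stdPdf p.2 *
      ((A * min p.1 0 + max p.1 0) *
        (A * min (u * p.1 + s * p.2) 0 + max (u * p.1 + s * p.2) 0))) with hf
  have hint : Integrable f := integrable_main A hA0 hA1.le u (abs_le.mpr ⟨hu1, hu2⟩)
  have step1 : (∫ z₁, ∫ z₂,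
        (A * min z₁ 0 + max z₁ 0) *
          (A * min (u * z₁ + s * z₂) 0 + max (u * z₁ + s * z₂) 0)
        ∂(gaussianReal 0 1) ∂(gaussianReal 0 1))
      = ∫ z₁, ∫ z₂, f (z₁, z₂) := by
    rw [integral_gaussianReal_eq]
    congr 1
    funext z₁
    rw [integral_gaussianReal_eq]
    rw [← MeasureTheory.integral_const_mul]
  have huncurry : Function.uncurry (fun x y => f (x, y)) = f := by
    funext p; simp [Function.uncurry]
  have hint' : Integrable (Function.uncurry fun x y => f (x, y))
      ((volume : Measure ℝ).prod volume) := by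
    rw [huncurry, ← MeasureTheory.Measure.volume_eq_prod]; exact hint
  have step2 : (∫ z₁, ∫ z₂, f (z₁, z₂)) = ∫ p, f p := by
    have h := MeasureTheory.integral_integral hint'
    simp only [Prod.mk.eta] at h
    rw [← MeasureTheory.Measure.volume_eq_prod] at h
    exact h
  have step3 : (∫ p, f p) = ∫ p in polarCoord.target, p.1 • f (polarCoord.symm p) :=
    (integral_comp_polarCoord_symm f).symm
  have step4 : (∫ p in polarCoord.target, p.1 • f (polarCoord.symm p))
      = ∫ p in Set.Ioi (0:ℝ) ×ˢ Set.Ioo (-π) π,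
          (p.1 ^ 3 * Real.exp (-p.1 ^ 2 / 2)) *
            ((2 * π)⁻¹ * ((A * min (Real.cos p.2) 0 + max (Real.cos p.2) 0) *
              (A * min (Real.cos (p.2 - α)) 0 + max (Real.cos (p.2 - α)) 0))) := by
    rw [show polarCoord.target = Set.Ioi (0:ℝ) ×ˢ Set.Ioo (-π) π from rfl]
    apply setIntegral_congr_fun (measurableSet_Ioi.prod measurableSet_Ioo)
    intro p hp
    have hr0 : 0 ≤ p.1 := le_of_lt hp.1
    have hsymm : polarCoord.symm p = (p.1 * Real.cos p.2, p.1 * Real.sin p.2) := rfl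
    dsimp only
    rw [hsymm]
    simp only [hf]
    have harg : u * (p.1 * Real.cos p.2) + s * (p.1 * Real.sin p.2)
        = p.1 * Real.cos (p.2 - α) := by
      rw [Real.cos_sub, hcos, hsin]; ring
    have h1 : A * min (p.1 * Real.cos p.2) 0 + max (p.1 * Real.cos p.2) 0
        = p.1 * (A * min (Real.cos p.2) 0 + max (Real.cos p.2) 0) := sigma_homog A hr0 _
    have h2 : A * min (u * (p.1 * Real.cos p.2) + s * (p.1 * Real.sin p.2)) 0
          + max (u * (p.1 * Real.cos p.2) + s * (p.1 * Real.sin p.2)) 0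
        = p.1 * (A * min (Real.cos (p.2 - α)) 0 + max (Real.cos (p.2 - α)) 0) := by
      rw [harg]; exact sigma_homog A hr0 _
    have hsq : Real.sqrt (2 * π) * Real.sqrt (2 * π) = 2 * π :=
      Real.mul_self_sqrt (by positivity)
    have he : Real.exp (-(p.1 * Real.cos p.2) ^ 2 / 2) * Real.exp (-(p.1 * Real.sin p.2) ^ 2 / 2)
        = Real.exp (-p.1 ^ 2 / 2) := by
      rw [← Real.exp_add]; congr 1; nlinarith [Real.sin_sq_add_cos_sq p.2]
    have h3 : stdPdf (p.1 * Real.cos p.2) * stdPdf (p.1 * Real.sin p.2)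
        = (2 * π)⁻¹ * Real.exp (-p.1 ^ 2 / 2) := by
      unfold stdPdf
      calc (Real.sqrt (2 * π))⁻¹ * Real.exp (-(p.1 * Real.cos p.2) ^ 2 / 2)
            * ((Real.sqrt (2 * π))⁻¹ * Real.exp (-(p.1 * Real.sin p.2) ^ 2 / 2))
          = (Real.sqrt (2 * π) * Real.sqrt (2 * π))⁻¹
            * (Real.exp (-(p.1 * Real.cos p.2) ^ 2 / 2)
              * Real.exp (-(p.1 * Real.sin p.2) ^ 2 / 2)) := by
            rw [mul_inv]; ring
        _ = (2 * π)⁻¹ * Real.exp (-p.1 ^ 2 / 2) := by rw [hsq, he]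
    rw [smul_eq_mul, h1, h2]
    calc p.1 * (stdPdf (p.1 * Real.cos p.2) * (stdPdf (p.1 * Real.sin p.2) *
          (p.1 * (A * min (Real.cos p.2) 0 + max (Real.cos p.2) 0) *
            (p.1 * (A * min (Real.cos (p.2 - α)) 0 + max (Real.cos (p.2 - α)) 0)))))
        = (stdPdf (p.1 * Real.cos p.2) * stdPdf (p.1 * Real.sin p.2)) *
            (p.1 ^ 3 * ((A * min (Real.cos p.2) 0 + max (Real.cos p.2) 0) *
              (A * min (Real.cos (p.2 - α)) 0 + max (Real.cos (p.2 - α)) 0))) := by ring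
      _ = _ := by rw [h3]; ring
  have step5 : (∫ p in Set.Ioi (0:ℝ) ×ˢ Set.Ioo (-π) π,
          (p.1 ^ 3 * Real.exp (-p.1 ^ 2 / 2)) *
            ((2 * π)⁻¹ * ((A * min (Real.cos p.2) 0 + max (Real.cos p.2) 0) *
              (A * min (Real.cos (p.2 - α)) 0 + max (Real.cos (p.2 - α)) 0))))
      = (∫ r in Set.Ioi (0:ℝ), r ^ 3 * Real.exp (-r ^ 2 / 2)) *
          ∫ θ in Set.Ioo (-π) π, (2 * π)⁻¹ * ((A * min (Real.cos θ) 0 + max (Real.cos θ) 0) *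
            (A * min (Real.cos (θ - α)) 0 + max (Real.cos (θ - α)) 0)) := by
    rw [MeasureTheory.Measure.volume_eq_prod]
    exact setIntegral_prod_mul (fun r : ℝ => r ^ 3 * Real.exp (-r ^ 2 / 2))
      (fun θ : ℝ => (2 * π)⁻¹ * ((A * min (Real.cos θ) 0 + max (Real.cos θ) 0) *
        (A * min (Real.cos (θ - α)) 0 + max (Real.cos (θ - α)) 0)))
      (Set.Ioi (0:ℝ)) (Set.Ioo (-π) π)
  have step6 : (∫ θ in Set.Ioo (-π) π, (2 * π)⁻¹ *
        ((A * min (Real.cos θ) 0 + max (Real.cos θ) 0) *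
          (A * min (Real.cos (θ - α)) 0 + max (Real.cos (θ - α)) 0)))
      = (2 * π)⁻¹ * (A * π * u + (1 - A) ^ 2 * (s + (π - α) * u) / 2) := by
    rw [← MeasureTheory.integral_Ioc_eq_integral_Ioo,
      ← intervalIntegral.integral_of_le (by linarith : -π ≤ π),
      intervalIntegral.integral_const_mul, angular' A hα0 hαπ, hcos, hsin]
  rw [step1, step2, step3, step4, step5, step6, radial_integral']
  rw [hsdef, hαdef]
  field_simp
  ring
end

section
/- Let 𝒱 ⊂ ℝ be a finite set, 𝒲 ⊆ 𝒱 nonempty with p = |𝒲| and q = |𝒱 ∖ 𝒲| ≥ 1, and suppose Σ_{w∈𝒲} w = 0 and Σ_{v∈𝒱∖𝒲} v = 0. Let the training set be T = {(v₁,v₂) ∈ 𝒱² : v₁ ∈ 𝒲 or v₂ ∈ 𝒲} with targets y(v₁,v₂) = v₁ + v₂. Let κ₀, κ₁, κ₂ ∈ ℝ, set δ₁ = κ₁ − κ₀ and δ₂ = κ₂ − κ₀, and define the kernel K((v₁,v₂),(v₁',v₂')) = κ_k where k = #{i ∈ {1,2} : v_i = v_i'}. Suppose a : T → ℝ is symmetric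 (a(v₁,v₂) = a(v₂,v₁)) and satisfies the interpolation equations Σ_{t'∈T} a(t') K(t,t') = y(t) for all t ∈ T. Assume (p−2)δ₁ + δ₂ ≠ 0 and that the 2×2 matrix with rows (2p(pκ₀+δ₁), p²κ₀ + 2(p−1)δ₁ + δ₂) and ((p+q−2)δ₁ + δ₂ + 2pqκ₀, q(pκ₀+δ₁)) is invertible. Then for every test pair (v₁,v₂) with v₁, v₂ ∈ 𝒱 ∖ 𝒲, Σ_{t∈T} a(t) K((v₁,v₂), t) = m·(v₁ + v₂), where m = p·δ₁ / ((p−2)δ₁ + δ₂). -/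
/-!
The kernel splits as `K s t = κ₀ + δ₁ [s.1 = t.1] + δ₁ [s.2 = t.2] + (δ₂ - 2δ₁) [s = t]`, so for a
symmetric coefficient vector `a` the prediction at `s` is
`κ₀ A + δ₁ (r s.1 + r s.2) + (δ₂ - 2δ₁) a s [s ∈ T]`, where `A` is the total mass of `a` and `r x`
its row sum at `x`. A test pair lies off `T`, so only `A` and two row sums of test symbols enter.
Summing the interpolation equations of row `u ∉ 𝒲` over `𝒲` gives
`((p - 2)δ₁ + δ₂) r u = p u - p κ₀ A - δ₁ B` with `B` the mass of the rows in `𝒲`; summing them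
further over `u`, and the equations on `𝒲 × 𝒲` over both coordinates, gives a homogeneous
`2 × 2` system in the mass `S` of the test rows and the mass of the `𝒲 × 𝒲` block, whose matrix
is the invertible one of the hypothesis. Hence both vanish, so do `A` and `B`, and
`r u = p u / ((p - 2)δ₁ + δ₂)`.
-/

open Finset

section KernelSums

variable {α β : Type*} [DecidableEq α]

def rowSum (T : Finset (α × β)) (a : α × β → ℝ) (x : α) : ℝ := ∑ t ∈ T with t.1 = x, a t

theorem rowSum_filter_product {s : Finset α} {t : Finset β} (P : α × β → Prop)
    [DecidablePred P] (a : α × β → ℝ) {x : α} (hx : x ∈ s) :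
    rowSum ((s ×ˢ t).filter P) a x = ∑ y ∈ t with P (x, y), a (x, y) :=
  sum_nbij' Prod.snd (Prod.mk x) (by grind) (by simp +contextual [hx])
    (by simp +contextual) (by simp) (by simp +contextual)

variable [DecidableEq β]

def agreementKernel (κ₀ κ₁ κ₂ : ℝ) (s t : α × β) : ℝ :=
  if s.1 = t.1 then (if s.2 = t.2 then κ₂ else κ₁) else (if s.2 = t.2 then κ₁ else κ₀)

theorem agreementKernel_eq (κ₀ δ₁ δ₂ : ℝ) (s t : α × β) :
    agreementKernel κ₀ (κ₀ + δ₁) (κ₀ + δ₂) s t =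
      κ₀ + (if s.1 = t.1 then δ₁ else 0) + (if s.2 = t.2 then δ₁ else 0)
        + (if s = t then δ₂ - 2 * δ₁ else 0) := by
  unfold agreementKernel
  by_cases h₁ : s.1 = t.1 <;> by_cases h₂ : s.2 = t.2 <;> simp [h₁, h₂, Prod.ext_iff]
  ring

theorem sum_mul_agreementKernel (κ₀ δ₁ δ₂ : ℝ) (T : Finset (α × β)) (a : α × β → ℝ)
    (s : α × β) :
    ∑ t ∈ T, a t * agreementKernel κ₀ (κ₀ + δ₁) (κ₀ + δ₂) s t =
      κ₀ * ∑ t ∈ T, a t + δ₁ * ∑ t ∈ T with t.1 = s.1, a t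
        + δ₁ * ∑ t ∈ T with t.2 = s.2, a t + (δ₂ - 2 * δ₁) * if s ∈ T then a s else 0 := by
  simp only [agreementKernel_eq, mul_add, sum_add_distrib, mul_ite, mul_zero, sum_ite_eq]
  simp only [← sum_filter, ← sum_mul, eq_comm (a := s.1), eq_comm (a := s.2)]
  split_ifs <;> ring

end KernelSums

section SymmetricPairs

variable {α : Type*} [DecidableEq α] {a : α × α → ℝ}

theorem sum_filter_snd_eq_rowSum {T : Finset (α × α)} (hT : ∀ t ∈ T, t.swap ∈ T)
    (ha : ∀ x y, a (x, y) = a (y, x)) (x : α) :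
    ∑ t ∈ T with t.2 = x, a t = rowSum T a x :=
  sum_nbij' Prod.swap Prod.swap (by simp +contextual [hT]) (by simp +contextual [hT])
    (by simp) (by simp) (fun t _ => ha t.1 t.2)

theorem sum_mul_agreementKernel_of_symm (κ₀ δ₁ δ₂ : ℝ) {T : Finset (α × α)}
    (hT : ∀ t ∈ T, t.swap ∈ T) (ha : ∀ x y, a (x, y) = a (y, x)) (s : α × α) :
    ∑ t ∈ T, a t * agreementKernel κ₀ (κ₀ + δ₁) (κ₀ + δ₂) s t =
      κ₀ * ∑ t ∈ T, a t + δ₁ * (rowSum T a s.1 + rowSum T a s.2)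
        + (δ₂ - 2 * δ₁) * if s ∈ T then a s else 0 := by
  rw [sum_mul_agreementKernel, sum_filter_snd_eq_rowSum hT ha]
  unfold rowSum
  ring

def trainingSet (V W : Finset α) : Finset (α × α) :=
  (V ×ˢ V).filter fun t => t.1 ∈ W ∨ t.2 ∈ W

variable {V W : Finset α}

theorem mem_trainingSet {t : α × α} :
    t ∈ trainingSet V W ↔ (t.1 ∈ V ∧ t.2 ∈ V) ∧ (t.1 ∈ W ∨ t.2 ∈ W) := by
  simp [trainingSet]

theorem swap_mem_trainingSet {t : α × α} (ht : t ∈ trainingSet V W) :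
    t.swap ∈ trainingSet V W := by
  simp_all [mem_trainingSet, or_comm]

theorem rowSum_trainingSet_of_mem (hWV : W ⊆ V) (a : α × α → ℝ) {x : α} (hx : x ∈ W) :
    rowSum (trainingSet V W) a x = ∑ y ∈ V, a (x, y) := by
  rw [trainingSet, rowSum_filter_product _ _ (hWV hx), filter_true_of_mem fun _ _ => Or.inl hx]

theorem rowSum_trainingSet_of_not_mem (hWV : W ⊆ V) (a : α × α → ℝ) {x : α} (hx : x ∈ V \ W) :
    rowSum (trainingSet V W) a x = ∑ y ∈ W, a (x, y) := by
  rw [mem_sdiff] at hx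
  rw [trainingSet, rowSum_filter_product _ _ hx.1]
  simp only [hx.2, false_or, filter_mem_eq_inter, inter_eq_right.mpr hWV]

theorem sum_trainingSet_eq_sum_rowSum (hWV : W ⊆ V) :
    ∑ t ∈ trainingSet V W, a t =
      ∑ w ∈ W, rowSum (trainingSet V W) a w + ∑ u ∈ V \ W, rowSum (trainingSet V W) a u := by
  rw [add_comm, sum_sdiff hWV]
  exact (sum_fiberwise_of_maps_to (fun t ht => (mem_trainingSet.mp ht).1.1) a).symm

theorem sum_rowSum_trainingSet_of_mem (hWV : W ⊆ V) (hsym : ∀ x y, a (x, y) = a (y, x)) :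
    ∑ w ∈ W, rowSum (trainingSet V W) a w =
      ∑ w ∈ W, ∑ w' ∈ W, a (w, w') + ∑ u ∈ V \ W, rowSum (trainingSet V W) a u := by
  have hcross : ∑ w ∈ W, ∑ u ∈ V \ W, a (w, u) = ∑ u ∈ V \ W, rowSum (trainingSet V W) a u := by
    rw [sum_comm]
    refine sum_congr rfl fun u hu => ?_
    rw [rowSum_trainingSet_of_not_mem hWV a hu]
    exact sum_congr rfl fun w _ => hsym w u
  rw [← hcross, ← sum_add_distrib]
  refine sum_congr rfl fun w hw => ?_
  rw [rowSum_trainingSet_of_mem hWV a hw, add_comm, sum_sdiff hWV]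

end SymmetricPairs

theorem sum_add_of_sum_eq_zero {R : Type*} [Semiring R] {s : Finset R} (hs : ∑ w ∈ s, w = 0)
    (u : R) : ∑ w ∈ s, (u + w) = #s * u := by
  rw [sum_add_distrib, hs, sum_const, nsmul_eq_mul, add_zero]

def InterpolatesSum {R : Type*} [Ring R] (T : Finset (R × R)) (K : R × R → R × R → R)
    (a : R × R → R) : Prop :=
  ∀ t ∈ T, ∑ t' ∈ T, a t' * K t t' = t.1 + t.2

section SymbolicAddition

variable {V W : Finset ℝ} {κ₀ δ₁ δ₂ : ℝ} {a : ℝ × ℝ → ℝ}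

theorem interp_eq_of_mem_trainingSet (hsym : ∀ x y, a (x, y) = a (y, x))
    (hinterp : InterpolatesSum (trainingSet V W) (agreementKernel κ₀ (κ₀ + δ₁) (κ₀ + δ₂)) a)
    {t : ℝ × ℝ} (ht : t ∈ trainingSet V W) :
    κ₀ * ∑ t' ∈ trainingSet V W, a t'
      + δ₁ * (rowSum (trainingSet V W) a t.1 + rowSum (trainingSet V W) a t.2)
      + (δ₂ - 2 * δ₁) * a t = t.1 + t.2 := by
  rw [← hinterp t ht, sum_mul_agreementKernel_of_symm κ₀ δ₁ δ₂ (fun _ => swap_mem_trainingSet) hsym,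
    if_pos ht]

theorem mul_rowSum_trainingSet_of_not_mem (hWV : W ⊆ V) (hWsum : ∑ w ∈ W, w = 0)
    (hsym : ∀ x y, a (x, y) = a (y, x))
    (hinterp : InterpolatesSum (trainingSet V W) (agreementKernel κ₀ (κ₀ + δ₁) (κ₀ + δ₂)) a)
    {u : ℝ} (hu : u ∈ V \ W) :
    ((#W - 2) * δ₁ + δ₂) * rowSum (trainingSet V W) a u =
      #W * u - #W * κ₀ * ∑ t ∈ trainingSet V W, a t
        - δ₁ * ∑ w ∈ W, rowSum (trainingSet V W) a w := by
  have hrow := sum_congr rfl fun w hw => interp_eq_of_mem_trainingSet hsym hinterp (t := (u, w))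
    (mem_trainingSet.mpr ⟨⟨(mem_sdiff.mp hu).1, hWV hw⟩, Or.inr hw⟩)
  dsimp only at hrow
  simp only [sum_add_distrib, ← mul_sum, sum_const, nsmul_eq_mul, sum_add_of_sum_eq_zero hWsum,
    ← rowSum_trainingSet_of_not_mem hWV a hu] at hrow
  linear_combination hrow

theorem sum_interp_over_sq_eq_zero (hWV : W ⊆ V) (hWsum : ∑ w ∈ W, w = 0)
    (hsym : ∀ x y, a (x, y) = a (y, x))
    (hinterp : InterpolatesSum (trainingSet V W) (agreementKernel κ₀ (κ₀ + δ₁) (κ₀ + δ₂)) a) :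
    #W ^ 2 * κ₀ * ∑ t ∈ trainingSet V W, a t
      + 2 * #W * δ₁ * ∑ w ∈ W, rowSum (trainingSet V W) a w
      + (δ₂ - 2 * δ₁) * ∑ w ∈ W, ∑ w' ∈ W, a (w, w') = 0 := by
  have hblock := sum_congr rfl fun w hw => sum_congr rfl fun w' hw' =>
    interp_eq_of_mem_trainingSet hsym hinterp (t := (w, w'))
      (mem_trainingSet.mpr ⟨⟨hWV hw, hWV hw'⟩, Or.inl hw⟩)
  dsimp only at hblock
  simp only [sum_add_distrib, ← mul_sum, sum_const, nsmul_eq_mul, sum_add_of_sum_eq_zero hWsum]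
    at hblock
  rw [← mul_sum, hWsum, mul_zero] at hblock
  linear_combination hblock

theorem sum_trainingSet_eq_zero_and_sum_rowSum_eq_zero (hWV : W ⊆ V) (hWsum : ∑ w ∈ W, w = 0)
    (hVsum : ∑ v ∈ V \ W, v = 0) (hsym : ∀ x y, a (x, y) = a (y, x))
    (hinterp : InterpolatesSum (trainingSet V W) (agreementKernel κ₀ (κ₀ + δ₁) (κ₀ + δ₂)) a)
    (hdet : (!![2 * (#W : ℝ) * ((#W : ℝ) * κ₀ + δ₁),
                (#W : ℝ) ^ 2 * κ₀ + 2 * ((#W : ℝ) - 1) * δ₁ + δ₂;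
                ((#W : ℝ) + (#(V \ W) : ℝ) - 2) * δ₁ + δ₂ + 2 * (#W : ℝ) * (#(V \ W) : ℝ) * κ₀,
                (#(V \ W) : ℝ) * ((#W : ℝ) * κ₀ + δ₁)] : Matrix (Fin 2) (Fin 2) ℝ).det ≠ 0) :
    ∑ t ∈ trainingSet V W, a t = 0 ∧ ∑ w ∈ W, rowSum (trainingSet V W) a w = 0 := by
  set A := ∑ t ∈ trainingSet V W, a t
  set B := ∑ w ∈ W, rowSum (trainingSet V W) a w
  set S := ∑ u ∈ V \ W, rowSum (trainingSet V W) a u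
  set AW := ∑ w ∈ W, ∑ w' ∈ W, a (w, w')
  have hA : A = B + S := sum_trainingSet_eq_sum_rowSum hWV
  have hB : B = AW + S := sum_rowSum_trainingSet_of_mem hWV hsym
  have hW := sum_interp_over_sq_eq_zero hWV hWsum hsym hinterp
  have hU : ((#W - 2) * δ₁ + δ₂) * S = -(#(V \ W) * #W * κ₀ * A) - #(V \ W) * δ₁ * B := by
    rw [mul_sum, sum_congr rfl fun u hu =>
      mul_rowSum_trainingSet_of_not_mem hWV hWsum hsym hinterp hu]
    simp only [sum_sub_distrib, sum_const, nsmul_eq_mul]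
    rw [← mul_sum, hVsum]
    ring
  have hzero : ![S, AW] = 0 := Matrix.eq_zero_of_mulVec_eq_zero hdet <| by
    ext i
    fin_cases i <;> simp [Matrix.mulVec, dotProduct, Fin.sum_univ_two]
    · linear_combination hW - (#W : ℝ) ^ 2 * κ₀ * (hA + hB) - 2 * (#W : ℝ) * δ₁ * hB
    · linear_combination hU - (#(V \ W) : ℝ) * #W * κ₀ * (hA + hB) - (#(V \ W) : ℝ) * δ₁ * hB
  have hS : S = 0 := congrFun hzero 0
  have hAW : AW = 0 := congrFun hzero 1
  exact ⟨by rw [hA, hB, hS, hAW]; ring, by rw [hB, hS, hAW]; ring⟩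

end SymbolicAddition

theorem symbolic_addition_memorization_leak_general
    (V W : Finset ℝ) (hWV : W ⊆ V)
    (p q : ℕ) (hp : p = W.card) (hq : q = (V \ W).card)
    (hWsum : ∑ w ∈ W, w = 0) (hVsum : ∑ v ∈ V \ W, v = 0)
    (κ₀ κ₁ κ₂ δ₁ δ₂ : ℝ) (hδ₁ : δ₁ = κ₁ - κ₀) (hδ₂ : δ₂ = κ₂ - κ₀)
    (K : ℝ × ℝ → ℝ × ℝ → ℝ)
    (hK : ∀ s t : ℝ × ℝ, K s t =
      if s.1 = t.1 then (if s.2 = t.2 then κ₂ else κ₁)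
      else (if s.2 = t.2 then κ₁ else κ₀))
    (T : Finset (ℝ × ℝ)) (hT : T = (V ×ˢ V).filter fun t => t.1 ∈ W ∨ t.2 ∈ W)
    (a : ℝ × ℝ → ℝ) (hsym : ∀ v₁ v₂ : ℝ, a (v₁, v₂) = a (v₂, v₁))
    (hinterp : ∀ t ∈ T, ∑ t' ∈ T, a t' * K t t' = t.1 + t.2)
    (hden : ((p : ℝ) - 2) * δ₁ + δ₂ ≠ 0)
    (hmat : (!![2 * (p : ℝ) * ((p : ℝ) * κ₀ + δ₁),
                (p : ℝ) ^ 2 * κ₀ + 2 * ((p : ℝ) - 1) * δ₁ + δ₂;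
                ((p : ℝ) + (q : ℝ) - 2) * δ₁ + δ₂ + 2 * (p : ℝ) * (q : ℝ) * κ₀,
                (q : ℝ) * ((p : ℝ) * κ₀ + δ₁)] : Matrix (Fin 2) (Fin 2) ℝ).det ≠ 0) :
    ∀ v₁ ∈ V \ W, ∀ v₂ ∈ V \ W,
      ∑ t ∈ T, a t * K (v₁, v₂) t
        = ((p : ℝ) * δ₁ / (((p : ℝ) - 2) * δ₁ + δ₂)) * (v₁ + v₂) := by
  intro v₁ hv₁ v₂ hv₂
  obtain rfl : K = agreementKernel κ₀ κ₁ κ₂ := funext fun s => funext (hK s)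
  obtain rfl : κ₁ = κ₀ + δ₁ := by linarith
  obtain rfl : κ₂ = κ₀ + δ₂ := by linarith
  obtain rfl : T = trainingSet V W := hT
  subst hp hq
  obtain ⟨hA, hB⟩ :=
    sum_trainingSet_eq_zero_and_sum_rowSum_eq_zero hWV hWsum hVsum hsym hinterp hmat
  have htest : (v₁, v₂) ∉ trainingSet V W := by
    simp [mem_trainingSet, (mem_sdiff.mp hv₁).2, (mem_sdiff.mp hv₂).2]
  have h₁ := mul_rowSum_trainingSet_of_not_mem hWV hWsum hsym hinterp hv₁
  have h₂ := mul_rowSum_trainingSet_of_not_mem hWV hWsum hsym hinterp hv₂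
  rw [hA, hB] at h₁ h₂
  rw [sum_mul_agreementKernel_of_symm _ _ _ (fun _ => swap_mem_trainingSet) hsym, if_neg htest, hA,
    div_mul_eq_mul_div, eq_div_iff hden]
  linear_combination δ₁ * (h₁ + h₂)

/-- Proposition 2 (memorization leak in symbolic addition): with zero-mean values,
the kernel model's test-set prediction is the true sum distorted by the
proportional factor m = p·δ₁ / ((p−2)δ₁ + δ₂). -/
theorem symbolic_addition_memorization_leak
    (V W : Finset ℝ) (hWV : W ⊆ V) (hWne : W.Nonempty)
    (p q : ℕ) (hp : p = W.card) (hq : q = (V \ W).card) (hq1 : 1 ≤ q)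
    (hWsum : ∑ w ∈ W, w = 0) (hVsum : ∑ v ∈ V \ W, v = 0)
    (κ₀ κ₁ κ₂ δ₁ δ₂ : ℝ) (hδ₁ : δ₁ = κ₁ - κ₀) (hδ₂ : δ₂ = κ₂ - κ₀)
    (K : ℝ × ℝ → ℝ × ℝ → ℝ)
    (hK : ∀ s t : ℝ × ℝ, K s t =
      if s.1 = t.1 then (if s.2 = t.2 then κ₂ else κ₁)
      else (if s.2 = t.2 then κ₁ else κ₀))
    (T : Finset (ℝ × ℝ)) (hT : T = (V ×ˢ V).filter fun t => t.1 ∈ W ∨ t.2 ∈ W)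
    (a : ℝ × ℝ → ℝ) (hsym : ∀ v₁ v₂ : ℝ, a (v₁, v₂) = a (v₂, v₁))
    (hinterp : ∀ t ∈ T, ∑ t' ∈ T, a t' * K t t' = t.1 + t.2)
    (hden : ((p : ℝ) - 2) * δ₁ + δ₂ ≠ 0)
    (hmat : (!![2 * (p : ℝ) * ((p : ℝ) * κ₀ + δ₁),
                (p : ℝ) ^ 2 * κ₀ + 2 * ((p : ℝ) - 1) * δ₁ + δ₂;
                ((p : ℝ) + (q : ℝ) - 2) * δ₁ + δ₂ + 2 * (p : ℝ) * (q : ℝ) * κ₀,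
                (q : ℝ) * ((p : ℝ) * κ₀ + δ₁)] : Matrix (Fin 2) (Fin 2) ℝ).det ≠ 0) :
    ∀ v₁ ∈ V \ W, ∀ v₂ ∈ V \ W,
      ∑ t ∈ T, a t * K (v₁, v₂) t
        = ((p : ℝ) * δ₁ / (((p : ℝ) - 2) * δ₁ + δ₂)) * (v₁ + v₂) :=
  symbolic_addition_memorization_leak_general V W hWV p q hp hq hWsum hVsum κ₀ κ₁ κ₂ δ₁ δ₂ hδ₁ hδ₂ K
    hK T hT a hsym hinterp hden hmat
end

section
/- Fix ρ ∈ (0,1] and define k̃ : [−1,1] → ℝ by k̃(u) = u + (ρ/π)(√(1−u²) − u·arccos u). Then k̃ maps [0,1] into [0,1], u = 1 is the unique fixed point of k̃ in [0,1], and for every u ∈ [0,1] the iterates k̃∘k̃∘⋯∘k̃(u) (L-fold composition) converge to 1 as L → ∞. -/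
/-!
Write `ktilde ρ u = u + (ρ / π) g u` with `g = ktildeGap`, `g u = √(1 - u²) - u arccos u`.
In the angle `θ = arccos u` one has `g = sin θ - θ cos θ`, which is positive for `0 < θ ≤ π`
(this is `θ < tan θ` below `π / 2`), and `g ≤ θ (1 - u) ≤ π (1 - u)` because `sin θ ≤ θ`.
Hence for `ρ ∈ (0, 1]` the map pushes every `u ∈ [0, 1)` strictly up without leaving `[0, 1]`,
so the iterates increase to a limit, which by continuity is a fixed point, and the only one
is `1`.
-/
/-- The normalized layer-to-layer kernel map of a deep random leaky-ReLU network,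
k̃(u) = u + (ρ/π)(√(1−u²) − u·arccos u). -/
noncomputable def ktilde (ρ : ℝ) (u : ℝ) : ℝ :=
  u + ρ / Real.pi * (Real.sqrt (1 - u ^ 2) - u * Real.arccos u)

open Real Set Filter Topology Function

theorem mul_cos_lt_sin {θ : ℝ} (h₀ : 0 < θ) (hπ : θ ≤ π) : θ * cos θ < sin θ := by
  rcases lt_or_ge θ (π / 2) with hlt | hge
  · have hcos : 0 < cos θ := cos_pos_of_mem_Ioo ⟨by linarith, hlt⟩
    have htan := lt_tan h₀ hlt
    rwa [tan_eq_sin_div_cos, lt_div_iff₀ hcos] at htan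
  · rcases hπ.lt_or_eq with hlt | rfl
    · have hsin := sin_pos_of_pos_of_lt_pi h₀ hlt
      have hcos := cos_nonpos_of_pi_div_two_le_of_le hge (by linarith)
      nlinarith
    · simp [pi_pos]

theorem exists_tendsto_iterate_isFixedPt {α : Type*} [ConditionallyCompleteLinearOrder α]
    [TopologicalSpace α] [OrderTopology α] {f : α → α} {s : Set α} (hs : IsClosed s)
    (hbdd : BddAbove s) (hf : Continuous f) (hmaps : MapsTo f s s) (hle : ∀ x ∈ s, x ≤ f x)
    {x : α} (hx : x ∈ s) :
    ∃ y ∈ s, IsFixedPt f y ∧ Tendsto (fun n => f^[n] x) atTop (𝓝 y) := by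
  have hmem (n : ℕ) : f^[n] x ∈ s := hmaps.iterate n hx
  have hmono : Monotone fun n => f^[n] x := monotone_nat_of_le_succ fun n => by
    rw [iterate_succ_apply']
    exact hle _ (hmem n)
  have htend := tendsto_atTop_ciSup hmono (hbdd.mono (range_subset_iff.2 hmem))
  exact ⟨_, hs.mem_of_tendsto htend (Eventually.of_forall hmem),
    isFixedPt_of_tendsto_iterate htend hf.continuousAt, htend⟩

noncomputable def ktildeGap (u : ℝ) : ℝ :=
  √(1 - u ^ 2) - u * arccos u

theorem ktilde_eq (ρ u : ℝ) : ktilde ρ u = u + ρ / π * ktildeGap u := rfl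

theorem ktildeGap_pos {u : ℝ} (h₁ : -1 ≤ u) (h₂ : u < 1) : 0 < ktildeGap u := by
  have h := mul_cos_lt_sin (arccos_pos.2 h₂) (arccos_le_pi u)
  rw [sin_arccos, cos_arccos h₁ h₂.le] at h
  unfold ktildeGap
  linarith

theorem ktildeGap_nonneg {u : ℝ} (h₁ : -1 ≤ u) (h₂ : u ≤ 1) : 0 ≤ ktildeGap u := by
  rcases h₂.lt_or_eq with h | rfl
  · exact (ktildeGap_pos h₁ h).le
  · simp [ktildeGap]

theorem ktildeGap_le {u : ℝ} (h : u ≤ 1) : ktildeGap u ≤ π * (1 - u) := by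
  have hsin := sin_le (arccos_nonneg u)
  rw [sin_arccos] at hsin
  unfold ktildeGap
  nlinarith [arccos_le_pi u]

theorem ktilde_one (ρ : ℝ) : ktilde ρ 1 = 1 := by
  simp [ktilde]

theorem continuous_ktilde (ρ : ℝ) : Continuous (ktilde ρ) := by
  unfold ktilde
  fun_prop

theorem le_ktilde {ρ u : ℝ} (hρ : 0 ≤ ρ) (h₁ : -1 ≤ u) (h₂ : u ≤ 1) : u ≤ ktilde ρ u := by
  rw [ktilde_eq]
  have := ktildeGap_nonneg h₁ h₂
  have := pi_pos
  linarith [show 0 ≤ ρ / π * ktildeGap u by positivity]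

theorem lt_ktilde {ρ u : ℝ} (hρ : 0 < ρ) (h₁ : -1 ≤ u) (h₂ : u < 1) : u < ktilde ρ u := by
  rw [ktilde_eq]
  have := ktildeGap_pos h₁ h₂
  have := pi_pos
  linarith [show 0 < ρ / π * ktildeGap u by positivity]

theorem ktilde_le_one {ρ u : ℝ} (hρ₀ : 0 ≤ ρ) (hρ₁ : ρ ≤ 1) (h : u ≤ 1) : ktilde ρ u ≤ 1 := by
  have hπ := pi_pos
  calc ktilde ρ u = u + ρ / π * ktildeGap u := ktilde_eq ρ u
    _ ≤ u + ρ / π * (π * (1 - u)) := by gcongr; exact ktildeGap_le h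
    _ = u + ρ * (1 - u) := by field_simp
    _ ≤ 1 := by nlinarith

theorem mapsTo_ktilde {ρ a : ℝ} (hρ₀ : 0 ≤ ρ) (hρ₁ : ρ ≤ 1) (ha : -1 ≤ a) :
    MapsTo (ktilde ρ) (Icc a 1) (Icc a 1) := fun _ hu =>
  ⟨hu.1.trans (le_ktilde hρ₀ (ha.trans hu.1) hu.2), ktilde_le_one hρ₀ hρ₁ hu.2⟩

theorem eq_one_of_ktilde_eq {ρ u : ℝ} (hρ : 0 < ρ) (h₁ : -1 ≤ u) (h₂ : u ≤ 1)
    (hfix : ktilde ρ u = u) : u = 1 :=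
  h₂.eq_of_not_lt fun h => (lt_ktilde hρ h₁ h).ne' hfix

/-- k̃ maps [0,1] into [0,1], u = 1 is its unique fixed point in [0,1], and the
iterates of k̃ converge to 1 from any starting point in [0,1]. -/
theorem ktilde_iterates_converge (ρ : ℝ) (hρ : ρ ∈ Set.Ioc (0 : ℝ) 1) :
    Set.MapsTo (ktilde ρ) (Set.Icc 0 1) (Set.Icc 0 1) ∧
    (ktilde ρ 1 = 1 ∧ ∀ u ∈ Set.Icc (0 : ℝ) 1, ktilde ρ u = u → u = 1) ∧
    ∀ u ∈ Set.Icc (0 : ℝ) 1,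
      Filter.Tendsto (fun L : ℕ => (ktilde ρ)^[L] u) Filter.atTop (nhds 1) := by
  obtain ⟨hρ₀, hρ₁⟩ := hρ
  have hmaps := mapsTo_ktilde hρ₀.le hρ₁ (a := 0) (by norm_num)
  have hunique : ∀ u ∈ Icc (0 : ℝ) 1, ktilde ρ u = u → u = 1 := fun u hu =>
    eq_one_of_ktilde_eq hρ₀ (by linarith [hu.1]) hu.2
  refine ⟨hmaps, ⟨ktilde_one ρ, hunique⟩, fun u hu => ?_⟩
  obtain ⟨y, hy, hyfix, htend⟩ := exists_tendsto_iterate_isFixedPt isClosed_Icc bddAbove_Icc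
    (continuous_ktilde ρ) hmaps (fun x hx => le_ktilde hρ₀.le (by linarith [hx.1]) hx.2) hu
  rwa [hunique y hy hyfix] at htend
end

section
/- For every d ∈ [0,1) and every s ∈ (0, 1/2], one has (d−1)·arccos((1−d)s + d) + √(1−d²) − d·arccos d < 0. -/
open Real Set

/-- Chord lower bound for `sin` from concavity on `[0, π]`. -/
lemma sin_chord_lb {t u : ℝ} (ht : 0 ≤ t) (htu : t ≤ u) (hu0 : 0 < u) (hu : u ≤ π) :
    (t / u) * Real.sin u ≤ Real.sin t := by
  have h : (t / u) • Real.sin u + (1 - t / u) • Real.sin 0 ≤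
      Real.sin ((t / u) • u + (1 - t / u) • (0 : ℝ)) :=
    strictConcaveOn_sin_Icc.concaveOn.2
      ⟨by linarith, hu⟩ ⟨le_rfl, Real.pi_pos.le⟩
      (div_nonneg ht hu0.le)
      (by have : t / u ≤ 1 := by rw [div_le_one hu0]; exact htu
          linarith)
      (by ring)
  have hx : (t / u) • u + (1 - t / u) • (0 : ℝ) = t := by
    simp only [smul_eq_mul, mul_zero, add_zero]
    field_simp
  rw [hx] at h
  simpa [smul_eq_mul, Real.sin_zero] using h

/-- `arccos x > √(2 (1 - x))` for `-1 ≤ x < 1`. -/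
lemma sqrt_lt_arccos {x : ℝ} (hx1 : -1 ≤ x) (hx2 : x < 1) :
    Real.sqrt (2 * (1 - x)) < Real.arccos x := by
  set y := Real.sqrt (2 * (1 - x)) with hy
  have hy0 : 0 < y := Real.sqrt_pos.2 (by linarith)
  have hysq : y ^ 2 = 2 * (1 - x) := Real.sq_sqrt (by linarith)
  have hyle : y ≤ 2 := by
    have h4 : Real.sqrt 4 = 2 := by
      rw [show (4 : ℝ) = 2 ^ 2 by norm_num]; exact Real.sqrt_sq (by norm_num)
    calc y ≤ Real.sqrt 4 := Real.sqrt_le_sqrt (by linarith)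
      _ = 2 := h4
  have hypi : y ≤ π := hyle.trans (by linarith [Real.pi_gt_three])
  have hcos : x < Real.cos y := by
    have := Real.one_sub_sq_div_two_lt_cos (x := y) (by positivity)
    have hx' : 1 - y ^ 2 / 2 = x := by rw [hysq]; ring
    linarith
  have hcos_mem : Real.cos y ∈ Icc (-1 : ℝ) 1 := ⟨Real.neg_one_le_cos y, Real.cos_le_one y⟩
  have := Real.strictAntiOn_arccos ⟨hx1, hx2.le⟩ hcos_mem hcos
  rwa [Real.arccos_cos hy0.le hypi] at this

noncomputable def Fres : ℝ → ℝ :=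
  fun u => 2 * Real.sqrt 2 * Real.sin u ^ 3 - Real.sin (2 * u) + 2 * u * Real.cos (2 * u)

lemma hasDerivFres (t : ℝ) :
    HasDerivAt Fres (2 * Real.sin t * Real.cos t * (3 * Real.sqrt 2 * Real.sin t - 4 * t)) t := by
  have h1 : HasDerivAt (fun u : ℝ => 2 * Real.sqrt 2 * Real.sin u ^ 3)
      (2 * Real.sqrt 2 * (3 * Real.sin t ^ 2 * Real.cos t)) t := by
    have := ((Real.hasDerivAt_sin t).fun_pow 3).const_mul (2 * Real.sqrt 2)
    exact this.congr_deriv (by norm_num)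
  have h2u : HasDerivAt (fun u : ℝ => 2 * u) 2 t := by
    simpa using (hasDerivAt_id t).const_mul 2
  have h2 : HasDerivAt (fun u : ℝ => Real.sin (2 * u)) (Real.cos (2 * t) * 2) t :=
    (Real.hasDerivAt_sin (2 * t)).comp t h2u
  have h3c : HasDerivAt (fun u : ℝ => Real.cos (2 * u)) (-Real.sin (2 * t) * 2) t :=
    (Real.hasDerivAt_cos (2 * t)).comp t h2u
  have h3 : HasDerivAt (fun u : ℝ => 2 * u * Real.cos (2 * u))
      (2 * Real.cos (2 * t) + 2 * t * (-Real.sin (2 * t) * 2)) t := h2u.mul h3c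
  have := (h1.sub h2).add h3
  have hgoal :
      2 * Real.sqrt 2 * (3 * Real.sin t ^ 2 * Real.cos t) - Real.cos (2 * t) * 2 +
          (2 * Real.cos (2 * t) + 2 * t * (-Real.sin (2 * t) * 2)) =
        2 * Real.sin t * Real.cos t * (3 * Real.sqrt 2 * Real.sin t - 4 * t) := by
    rw [Real.sin_two_mul]
    ring
  rw [hgoal] at this
  exact this

lemma Fres_zero : Fres 0 = 0 := by simp [Fres]

lemma Fres_pi_div_four : Fres (π / 4) = 0 := by
  have h2 : Real.sqrt 2 ^ 2 = 2 := Real.sq_sqrt (by norm_num)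
  have : (2 : ℝ) * (π / 4) = π / 2 := by ring
  simp only [Fres, this, Real.sin_pi_div_two, Real.cos_pi_div_two, Real.sin_pi_div_four]
  nlinarith [h2, Real.sqrt_nonneg 2]

lemma Fres_nonneg {u : ℝ} (hu0 : 0 < u) (hu : u ≤ π / 4) : 0 ≤ Fres u := by
  have hpi : π ≤ 4 := by linarith [Real.pi_le_four]
  have hupi4 : u ≤ π := by linarith [Real.pi_pos]
  have hcont : Continuous Fres := by
    unfold Fres; fun_prop
  rcases le_or_gt (4 * u) (3 * Real.sqrt 2 * Real.sin u) with hc | hc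
  · -- monotone on [0, u], Fres 0 = 0
    have hmono : MonotoneOn Fres (Icc 0 u) := by
      apply monotoneOn_of_deriv_nonneg (convex_Icc 0 u) hcont.continuousOn
      · intro x hx
        exact (hasDerivFres x).differentiableAt.differentiableWithinAt
      · intro x hx
        rw [interior_Icc] at hx
        rw [(hasDerivFres x).deriv]
        have hx0 : 0 < x := hx.1
        have hxu : x < u := hx.2
        have hsin : 0 < Real.sin x :=
          Real.sin_pos_of_pos_of_lt_pi hx0 (by linarith [Real.pi_gt_three])
        have hcosp : 0 < Real.cos x := by
          apply Real.cos_pos_of_mem_Ioo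
          constructor <;> [linarith [Real.pi_pos]; linarith [Real.pi_gt_three]]
        have hchord : (x / u) * Real.sin u ≤ Real.sin x :=
          sin_chord_lb hx0.le hxu.le hu0 hupi4
        have hkey : 4 * x ≤ 3 * Real.sqrt 2 * Real.sin x := by
          have h1 : (x / u) * (4 * u) ≤ (x / u) * (3 * Real.sqrt 2 * Real.sin u) :=
            mul_le_mul_of_nonneg_left hc (by positivity)
          have h2 : (x / u) * (4 * u) = 4 * x := by field_simp
          have h3 : (x / u) * (3 * Real.sqrt 2 * Real.sin u) ≤ 3 * Real.sqrt 2 * Real.sin x := by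
            have := mul_le_mul_of_nonneg_left hchord (by positivity : (0:ℝ) ≤ 3 * Real.sqrt 2)
            calc (x / u) * (3 * Real.sqrt 2 * Real.sin u)
                = 3 * Real.sqrt 2 * ((x / u) * Real.sin u) := by ring
              _ ≤ 3 * Real.sqrt 2 * Real.sin x := this
          linarith
        have : 0 ≤ 3 * Real.sqrt 2 * Real.sin x - 4 * x := by linarith
        positivity
    have := hmono ⟨le_rfl, hu0.le⟩ ⟨hu0.le, le_rfl⟩ hu0.le
    rwa [Fres_zero] at this
  · -- antitone on [u, π/4], Fres (π/4) = 0
    have hanti : AntitoneOn Fres (Icc u (π / 4)) := by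
      apply antitoneOn_of_deriv_nonpos (convex_Icc u (π / 4)) hcont.continuousOn
      · intro x hx
        exact (hasDerivFres x).differentiableAt.differentiableWithinAt
      · intro x hx
        rw [interior_Icc] at hx
        rw [(hasDerivFres x).deriv]
        have hx0 : 0 < x := lt_trans hu0 hx.1
        have hx4 : x < π / 4 := hx.2
        have hsin : 0 < Real.sin x :=
          Real.sin_pos_of_pos_of_lt_pi hx0 (by linarith [Real.pi_pos])
        have hcosp : 0 < Real.cos x := by
          apply Real.cos_pos_of_mem_Ioo
          constructor <;> [linarith [Real.pi_pos]; linarith [Real.pi_pos]]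
        have hchord : (u / x) * Real.sin x ≤ Real.sin u :=
          sin_chord_lb hu0.le hx.1.le hx0 (by linarith [Real.pi_pos])
        have hkey : 3 * Real.sqrt 2 * Real.sin x ≤ 4 * x := by
          have h3 : 3 * Real.sqrt 2 * ((u / x) * Real.sin x) ≤ 3 * Real.sqrt 2 * Real.sin u :=
            mul_le_mul_of_nonneg_left hchord (by positivity)
          have h4 : 3 * Real.sqrt 2 * Real.sin u ≤ 4 * u := hc.le
          have h5 : 3 * Real.sqrt 2 * ((u / x) * Real.sin x)
              = (u / x) * (3 * Real.sqrt 2 * Real.sin x) := by ring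
          have h6 : (u / x) * (3 * Real.sqrt 2 * Real.sin x) ≤ 4 * u := by
            rw [← h5]; linarith
          have h7 : (u / x) * (3 * Real.sqrt 2 * Real.sin x) ≤ (u / x) * (4 * x) := by
            have : (u / x) * (4 * x) = 4 * u := by field_simp
            rw [this]; exact h6
          have hux : 0 < u / x := by positivity
          exact le_of_mul_le_mul_left (by linarith [h7]) hux
        have h8 : 3 * Real.sqrt 2 * Real.sin x - 4 * x ≤ 0 := by linarith
        have h9 : 0 ≤ 2 * Real.sin x * Real.cos x := by positivity
        exact mul_nonpos_of_nonneg_of_nonpos h9 h8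
    have := hanti ⟨le_rfl, hu⟩ ⟨hu, le_rfl⟩ hu
    rwa [Fres_pi_div_four] at this

/-- The residual r(s,d) = (d−1)·arccos((1−d)s + d) + √(1−d²) − d·arccos d is
negative for every d ∈ [0,1) and s ∈ (0, 1/2]. -/
theorem residual_neg :
    ∀ d ∈ Set.Ico (0 : ℝ) 1, ∀ s ∈ Set.Ioc (0 : ℝ) (1 / 2),
      (d - 1) * Real.arccos ((1 - d) * s + d)
          + Real.sqrt (1 - d ^ 2) - d * Real.arccos d < 0 := by
  rintro d ⟨hd0, hd1⟩ s ⟨hs0, hs2⟩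
  set θ := Real.arccos d with hθ
  have hθpos : 0 < θ := Real.arccos_pos.2 hd1
  have hθle : θ ≤ π / 2 := Real.arccos_le_pi_div_two.2 hd0
  have hcosθ : Real.cos θ = d := Real.cos_arccos (by linarith) hd1.le
  have hsinθ : Real.sin θ = Real.sqrt (1 - d ^ 2) := Real.sin_arccos d
  set u := θ / 2 with hu
  have hu0 : 0 < u := by positivity
  have hu4 : u ≤ π / 4 := by rw [hu]; linarith
  -- sin u ^ 2 = (1 - d)/2
  have hsinsq : Real.sin u ^ 2 = (1 - d) / 2 := by
    have h := Real.sin_sq_eq_half_sub (θ / 2)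
    rw [show 2 * (θ / 2) = θ by ring, hcosθ] at h
    rw [hu]
    linarith
  have hsinu_pos : 0 < Real.sin u :=
    Real.sin_pos_of_pos_of_lt_pi hu0 (by linarith [Real.pi_pos])
  -- √(1 - d) = √2 * sin u
  have hsqrt1d : Real.sqrt (2 * (1 - (1 + d) / 2)) = Real.sqrt 2 * Real.sin u := by
    have h1 : 2 * (1 - (1 + d) / 2) = (Real.sqrt 2 * Real.sin u) ^ 2 := by
      have h2 : Real.sqrt 2 ^ 2 = 2 := Real.sq_sqrt (by norm_num)
      nlinarith [hsinsq]
    rw [h1, Real.sqrt_sq (by positivity)]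
  -- Step A: monotonicity in s
  have hmid_le : (1 - d) * s + d ≤ (1 + d) / 2 := by nlinarith
  have hmid_lt1 : (1 + d) / 2 < 1 := by linarith
  have hmid_ge : -1 ≤ (1 - d) * s + d := by nlinarith
  have hA : Real.arccos ((1 + d) / 2) ≤ Real.arccos ((1 - d) * s + d) := by
    rcases eq_or_lt_of_le hmid_le with h | h
    · rw [h]
    · exact (Real.strictAntiOn_arccos ⟨hmid_ge, by linarith⟩
        ⟨by linarith, hmid_lt1.le⟩ h).le
  -- Step B: arccos((1+d)/2) > √2 sin u
  have hB : Real.sqrt 2 * Real.sin u < Real.arccos ((1 + d) / 2) := by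
    have := sqrt_lt_arccos (x := (1 + d) / 2) (by linarith) hmid_lt1
    rwa [hsqrt1d] at this
  -- Step C: F(u) ≥ 0, i.e. 2√2 sin³u ≥ sin θ − θ cos θ
  have hC : Real.sin θ - θ * Real.cos θ ≤ 2 * Real.sqrt 2 * Real.sin u ^ 3 := by
    have := Fres_nonneg hu0 hu4
    have h2u : 2 * u = θ := by rw [hu]; ring
    unfold Fres at this
    rw [h2u] at this
    linarith
  -- combine
  have h1d : 1 - d = 2 * Real.sin u ^ 2 := by linarith [hsinsq]
  have hstep : (d - 1) * Real.arccos ((1 - d) * s + d)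
      ≤ (d - 1) * Real.arccos ((1 + d) / 2) :=
    mul_le_mul_of_nonpos_left hA (by linarith)
  have hstep2 : (d - 1) * Real.arccos ((1 + d) / 2)
      < (d - 1) * (Real.sqrt 2 * Real.sin u) := by
    apply mul_lt_mul_of_neg_left hB (by linarith)
  have hstep3 : (d - 1) * (Real.sqrt 2 * Real.sin u) = -(2 * Real.sqrt 2 * Real.sin u ^ 3) := by
    rw [show (d - 1 : ℝ) = -(1 - d) by ring, h1d]
    ring
  have hfin : Real.sqrt (1 - d ^ 2) - d * θ ≤ 2 * Real.sqrt 2 * Real.sin u ^ 3 := by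
    rw [← hsinθ]
    calc Real.sin θ - d * θ = Real.sin θ - θ * Real.cos θ := by rw [hcosθ]; ring
      _ ≤ _ := hC
  linarith
end

section
/- Let κ₀, κ₁, κ₂ ∈ ℝ with κ₂² ≠ κ₁². Let K be the 2×2 matrix with rows (κ₂, κ₁) and (κ₁, κ₂), let K̃ be the 2×2 matrix with rows (κ₁, κ₀) and (κ₀, κ₁), and let y = (1, −1)ᵀ. Then the test predictions ŷ = K̃ K⁻¹ y satisfy ŷ = m·(1,−1)ᵀ with m = (κ₁ − κ₀)/(κ₂ − κ₁). Moreover, if κ₂ ≠ κ₀ and S := (κ₁ − κ₀)/(κ₂ − κ₀), then m = S/(1 − S). -/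
/-- Invariance task (memorization leak margin): the kernel model's test
predictions K̃K⁻¹y equal m·(1,−1) with m = (κ₁−κ₀)/(κ₂−κ₁); moreover, writing
S = (κ₁−κ₀)/(κ₂−κ₀), one has m = S/(1−S). -/
theorem invariance_margin (κ₀ κ₁ κ₂ : ℝ) (h : κ₂ ^ 2 ≠ κ₁ ^ 2) :
    ((!![κ₁, κ₀; κ₀, κ₁] : Matrix (Fin 2) (Fin 2) ℝ) *
        (!![κ₂, κ₁; κ₁, κ₂] : Matrix (Fin 2) (Fin 2) ℝ)⁻¹).mulVec ![1, -1]
      = ((κ₁ - κ₀) / (κ₂ - κ₁)) • ![1, -1] ∧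
    (κ₂ ≠ κ₀ →
      (κ₁ - κ₀) / (κ₂ - κ₁)
        = ((κ₁ - κ₀) / (κ₂ - κ₀)) / (1 - (κ₁ - κ₀) / (κ₂ - κ₀))) := by
  have hd : κ₂ ^ 2 - κ₁ ^ 2 ≠ 0 := sub_ne_zero.mpr h
  have hne : κ₂ - κ₁ ≠ 0 := by
    intro h0
    apply hd
    have : κ₂ = κ₁ := by linarith [sub_eq_zero.mp h0]
    rw [this]; ring
  have hinv : (!![κ₂, κ₁; κ₁, κ₂] : Matrix (Fin 2) (Fin 2) ℝ)⁻¹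
      = (κ₂ ^ 2 - κ₁ ^ 2)⁻¹ • !![κ₂, -κ₁; -κ₁, κ₂] := by
    apply Matrix.inv_eq_right_inv
    ext i j
    fin_cases i <;> fin_cases j <;>
      simp [Matrix.mul_apply, Fin.sum_univ_succ, Matrix.one_apply] <;>
      field_simp <;> ring
  constructor
  · rw [hinv]
    ext i
    fin_cases i <;>
      simp [Matrix.mulVec, Matrix.mul_apply, Fin.sum_univ_succ, dotProduct] <;>
      field_simp <;> ring
  · intro h20
    have h20' : κ₂ - κ₀ ≠ 0 := sub_ne_zero.mpr h20
    field_simp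
    rw [show κ₂ - κ₀ - (κ₁ - κ₀) = κ₂ - κ₁ by ring, mul_div_assoc, div_self hne, mul_one]
end

section
/- Let κ₂ ∈ ℝ with κ₂(κ₂² − 2) ≠ 0. Let K be the 3×3 matrix with rows (κ₂, 1, 1), (1, κ₂, 0), and (1, 0, κ₂), let k̃ = (0, 1, 1)ᵀ and y = (1, −1, 1)ᵀ. Then K is invertible and the margin m := −k̃ᵀ K⁻¹ y equals 2/(κ₂² − 2); equivalently, setting S := 1/κ₂, m = 2S² / (1 − 2S²). -/
/-- Partial exposure task (shortcut distortion margin): the training kernel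
matrix K is invertible and the margin m = −k̃ᵀK⁻¹y equals 2/(κ₂² − 2), which,
with S = 1/κ₂, equals 2S²/(1 − 2S²). -/
theorem partial_exposure_margin (κ₂ : ℝ) (h : κ₂ * (κ₂ ^ 2 - 2) ≠ 0) :
    IsUnit (!![κ₂, 1, 1; 1, κ₂, 0; 1, 0, κ₂] : Matrix (Fin 3) (Fin 3) ℝ).det ∧
    -(dotProduct ![0, 1, 1]
        ((!![κ₂, 1, 1; 1, κ₂, 0; 1, 0, κ₂] : Matrix (Fin 3) (Fin 3) ℝ)⁻¹.mulVec
          ![1, -1, 1]))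
      = 2 / (κ₂ ^ 2 - 2) ∧
    2 / (κ₂ ^ 2 - 2) = 2 * (1 / κ₂) ^ 2 / (1 - 2 * (1 / κ₂) ^ 2) := by
  have hκ : κ₂ ≠ 0 := fun hz => h (by rw [hz]; ring)
  have h2 : κ₂ ^ 2 - 2 ≠ 0 := fun hz => h (by rw [hz]; ring)
  have hdet : (!![κ₂, 1, 1; 1, κ₂, 0; 1, 0, κ₂] : Matrix (Fin 3) (Fin 3) ℝ).det
      = κ₂ * (κ₂ ^ 2 - 2) := by
    simp [Matrix.det_fin_three, Matrix.vecHead, Matrix.vecTail]; ring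
  refine ⟨by rw [hdet]; exact isUnit_iff_ne_zero.mpr h, ?_, ?_⟩
  · rw [Matrix.inv_def, hdet, Matrix.adjugate_fin_three]
    simp [Matrix.mulVec, dotProduct, Fin.sum_univ_three, Matrix.vecHead, Matrix.vecTail]
    field_simp
    ring
  · field_simp
end

section
/- Let (Ω, ℱ, P) be a probability space, d ≥ 1, and let 𝒢 ⊆ ℱ be a sub-σ-algebra. Let W : Ω → ℝ^d be 𝒢-measurable with each coordinate integrable, and let V : Ω → ℝ^d be independent of 𝒢, with each coordinate integrable and E[V] = 0, and suppose the inner product ⟨W, V⟩ is integrable. Then E[⟨W, V⟩] = 0. Consequently, in the setting of Proposition 3 — where the representation of z ∈ Z = Z_1 × ⋯ × Z_C is x(z) = Σ_{J ⊆ {1,…,C}} x_J[z_J] for a jointly independent family of centered integrable random vectors x_J[ζ] ∈ ℝ^d, the dual coefficients a and training matrix X are measurable functions of the training-set vectors, and the test prediction for z̃ decomposes as f(z̃) = Σ_{J ∈ Conj(z̃|T)} ⟨aᵀX, x_J[z̃_J]⟩ + Σ_{J ∉ Conj(z̃|T)} ⟨aᵀX, x_J[z̃_J]⟩ with aᵀX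 integrable and each inner product integrable — the expectation of the second sum vanishes, so E[f(z̃)] equals the expectation of the conjunction-wise additive part. -/
open MeasureTheory ProbabilityTheory Finset

/-- Proposition 3 core and consequence. Core: if W is a 𝒢-measurable random
vector with integrable coordinates and V is a random vector independent of 𝒢
with integrable, centered coordinates, and ⟨W,V⟩ is integrable, then
E[⟨W,V⟩] = 0. Consequence: if the test prediction decomposes as
f = g + ∑_{J ∉ Conj(z̃|T)} ⟨aᵀX, x_J[z̃_J]⟩, where g is the conjunction-wise
additive part, each aᵀX-type vector W J is 𝒢-measurable and each x_J[z̃_J]-type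
vector V J is independent of 𝒢 and centered, then E[f] = E[g]. -/
theorem expectation_conjunction_wise_additive
    {Ω : Type*} (𝒢 : MeasurableSpace Ω) [mΩ : MeasurableSpace Ω] (P : Measure Ω) [IsProbabilityMeasure P]
    (d : ℕ) (hd : 1 ≤ d) (h𝒢 : 𝒢 ≤ mΩ) :
    (∀ W V : Ω → Fin d → ℝ,
      Measurable[𝒢] W →
      (∀ i, Integrable (fun ω => W ω i) P) →
      Measurable V →
      Indep 𝒢 (MeasurableSpace.comap V inferInstance) P →
      (∀ i, Integrable (fun ω => V ω i) P) →
      (∀ i, ∫ ω, V ω i ∂P = 0) →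
      Integrable (fun ω => ∑ i, W ω i * V ω i) P →
      ∫ ω, ∑ i, W ω i * V ω i ∂P = 0) ∧
    (∀ (C : ℕ) (Jset : Finset (Finset (Fin C)))
        (f g : Ω → ℝ) (W V : Finset (Fin C) → Ω → Fin d → ℝ),
      (∀ J ∈ Jset, Measurable[𝒢] (W J)) →
      (∀ J ∈ Jset, ∀ i, Integrable (fun ω => W J ω i) P) →
      (∀ J ∈ Jset, Measurable (V J)) →
      (∀ J ∈ Jset, Indep 𝒢 (MeasurableSpace.comap (V J) inferInstance) P) →
      (∀ J ∈ Jset, ∀ i, Integrable (fun ω => V J ω i) P) →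
      (∀ J ∈ Jset, ∀ i, ∫ ω, V J ω i ∂P = 0) →
      (∀ J ∈ Jset, Integrable (fun ω => ∑ i, W J ω i * V J ω i) P) →
      (∀ ω, f ω = g ω + ∑ J ∈ Jset, ∑ i, W J ω i * V J ω i) →
      Integrable g P →
      ∫ ω, f ω ∂P = ∫ ω, g ω ∂P) := by
  have core : ∀ W V : Ω → Fin d → ℝ,
      Measurable[𝒢] W →
      (∀ i, Integrable (fun ω => W ω i) P) →
      Measurable V →
      Indep 𝒢 (MeasurableSpace.comap V inferInstance) P →
      (∀ i, Integrable (fun ω => V ω i) P) →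
      (∀ i, ∫ ω, V ω i ∂P = 0) →
      Integrable (fun ω => ∑ i, W ω i * V ω i) P →
      ∫ ω, ∑ i, W ω i * V ω i ∂P = 0 := by
    intro W V hWmeas hWint hVmeas hIndep hVint hVzero _hint
    have hIF : ∀ i : Fin d, IndepFun (fun ω => W ω i) (fun ω => V ω i) P := by
      intro i
      rw [IndepFun_iff_Indep]
      refine indep_of_indep_of_le_right (indep_of_indep_of_le_left hIndep ?_) ?_
      · exact ((measurable_pi_apply i).comp hWmeas).comap_le
      · have : (fun ω => V ω i) = (fun v : Fin d → ℝ => v i) ∘ V := rfl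
        rw [this, ← MeasurableSpace.comap_comp]
        exact MeasurableSpace.comap_mono (measurable_pi_apply i).comap_le
    have hprodint : ∀ i : Fin d,
        Integrable (fun ω => W ω i * V ω i) P :=
      fun i => (hIF i).integrable_mul (hWint i) (hVint i)
    rw [integral_finset_sum _ (fun i _ => hprodint i)]
    refine Finset.sum_eq_zero fun i _ => ?_
    have h := IndepFun.integral_mul_eq_mul_integral (hIF i) (hWint i).1 (hVint i).1
    have e : (fun a => W a i * V a i) = ((fun ω => W ω i) * fun ω => V ω i) := rfl
    rw [e, h, hVzero i, mul_zero]
  refine ⟨core, ?_⟩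
  intro C Jset f g W V hWmeas hWint hVmeas hIndep hVint hVzero hint hf hg
  have hfg : f = fun ω => g ω + ∑ J ∈ Jset, ∑ i, W J ω i * V J ω i := funext hf
  rw [hfg, integral_add hg (integrable_finset_sum _ fun J hJ => hint J hJ),
    integral_finset_sum _ (fun J hJ => hint J hJ)]
  have : ∀ J ∈ Jset, ∫ ω, ∑ i, W J ω i * V J ω i ∂P = 0 := fun J hJ =>
    core (W J) (V J) (hWmeas J hJ) (hWint J hJ) (hVmeas J hJ) (hIndep J hJ)
      (hVint J hJ) (hVzero J hJ) (hint J hJ)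
  rw [Finset.sum_eq_zero this, add_zero]
end
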